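/- arXiv:1211.0558 — 5 statements merged into one kernel-verified Lean document; each statement's English description precedes it below -/
import Mathlib

section
/- For every natural number N there exists ℓ₀ ∈ ℕ such that for all ℓ ≥ ℓ₀: every bipartite graph A with v(A) ≤ 2ℓ + N and e(A) ≥ ℓ² − N contains a subgraph (a subset of its vertices together with all edges of A between them) that is almost ℓ-complete. -/
noncomputable section

/-- A bipartite graph: two disjoint finite vertex sets `L`, `R`
and a set of edges `E ⊆ L × R`. -/
structure BipGraph (V : Type) [DecidableEq V] where
  L : Finset V
  R : Finset V
  disj : Disjoint L R
  E : Finset (V × V)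
  E_sub : E ⊆ L ×ˢ R

namespace BipGraph

variable {V : Type} [DecidableEq V]

/-- the vertex set -/
def verts (A : BipGraph V) : Finset V := A.L ∪ A.R

/-- `v A` is the number of vertices of `A` -/
def v (A : BipGraph V) : ℕ := A.verts.card

/-- `e A` is the number of edges of `A` -/
def e (A : BipGraph V) : ℕ := A.E.card

/-- the underlying simple graph on the vertex set of `A` -/
def graph (A : BipGraph V) : SimpleGraph {x : V // x ∈ A.verts} where
  Adj x y := (x.1, y.1) ∈ A.E ∨ (y.1, x.1) ∈ A.E
  symm := by
    constructor
    intro x y h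
    exact h.symm
  loopless := by
    constructor
    intro x h
    have hx : (x.1, x.1) ∈ A.E := by rcases h with h | h <;> exact h
    have hmem := A.E_sub hx
    rw [Finset.mem_product] at hmem
    exact Finset.disjoint_left.mp A.disj hmem.1 hmem.2

/-- `CC A` is the number of connected components of `A` (isolated vertices count). -/
def CC (A : BipGraph V) : ℕ := Nat.card A.graph.ConnectedComponent

/-- `k A = v A - CC A` -/
def k (A : BipGraph V) : ℕ := A.v - A.CC

/-- `A` is complete if every left-right pair is an edge. -/
def Complete (A : BipGraph V) : Prop := A.E = A.L ×ˢ A.R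

/-- `A` is balanced if its parts differ in size by at most one. -/
def Balanced (A : BipGraph V) : Prop := ((A.L.card : ℤ) - (A.R.card : ℤ)).natAbs ≤ 1

/-- `A` is null if it has no edges. -/
def Null (A : BipGraph V) : Prop := A.E = ∅

/-- the induced subgraph of `A` on a set `S` of vertices: the vertices of `A`
belonging to `S`, together with all edges of `A` between them. -/
def induce (A : BipGraph V) (S : Finset V) : BipGraph V where
  L := A.L ∩ S
  R := A.R ∩ S
  disj := A.disj.mono Finset.inter_subset_left Finset.inter_subset_left
  E := A.E.filter (fun p => p.1 ∈ S ∧ p.2 ∈ S)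
  E_sub := by
    intro p hp
    rw [Finset.mem_filter] at hp
    have hmem := A.E_sub hp.1
    rw [Finset.mem_product] at hmem ⊢
    exact ⟨Finset.mem_inter.mpr ⟨hmem.1, hp.2.1⟩, Finset.mem_inter.mpr ⟨hmem.2, hp.2.2⟩⟩

/-- the degree of a vertex: the number of edges incident to it -/
def deg (A : BipGraph V) (x : V) : ℕ :=
  (A.E.filter (fun p => p.1 = x ∨ p.2 = x)).card

/-- `A` is almost `ℓ`-complete: the two parts have sizes within `0.01 * ℓ` of `ℓ`,
and every vertex has degree at least `0.9 * ℓ`. -/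
def AlmostComplete (ℓ : ℕ) (A : BipGraph V) : Prop :=
  |(A.L.card : ℝ) - (ℓ : ℝ)| ≤ 0.01 * ℓ ∧ |(A.R.card : ℝ) - (ℓ : ℝ)| ≤ 0.01 * ℓ ∧
  ∀ x ∈ A.verts, (0.9 : ℝ) * ℓ ≤ (A.deg x : ℝ)

/-- the disjoint union of two vertex-disjoint bipartite graphs -/
def disjUnion (A B : BipGraph V) (h : Disjoint A.verts B.verts) : BipGraph V where
  L := A.L ∪ B.L
  R := A.R ∪ B.R
  disj := by
    have h1 : Disjoint A.L B.R := h.mono Finset.subset_union_left Finset.subset_union_right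
    have h2 : Disjoint B.L A.R := h.symm.mono Finset.subset_union_left Finset.subset_union_right
    rw [Finset.disjoint_union_left, Finset.disjoint_union_right, Finset.disjoint_union_right]
    exact ⟨⟨A.disj, h1⟩, ⟨h2, B.disj⟩⟩
  E := A.E ∪ B.E
  E_sub := by
    intro p hp
    rw [Finset.mem_union] at hp
    rw [Finset.mem_product]
    rcases hp with hp | hp
    · have := A.E_sub hp; rw [Finset.mem_product] at this
      exact ⟨Finset.mem_union_left _ this.1, Finset.mem_union_left _ this.2⟩
    · have := B.E_sub hp; rw [Finset.mem_product] at this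
      exact ⟨Finset.mem_union_right _ this.1, Finset.mem_union_right _ this.2⟩

end BipGraph

/-- `estar (2*b) = b^2` and `estar (2*b+1) = b*(b+1)`; i.e. `⌊c/2⌋ * ⌈c/2⌉`. -/
def estar (c : ℕ) : ℕ := (c / 2) * ((c + 1) / 2)

/-!
Since `|L| + |R| ≤ 2ℓ + N` while `|L| |R| ≥ e ≥ ℓ² - N`, both parts have size `ℓ + O(√(Nℓ))`
and only `O(Nℓ)` pairs of `L × R` are non-edges. Deleting a vertex of degree `< 0.9ℓ` from a
subgraph whose parts still have size `≥ 0.99ℓ` destroys at least `0.09ℓ` non-edges, so such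
deletions can only happen `O(N)` times and the parts stay of size `≈ ℓ`. Rather than running the
deletion process, we take `S` minimising `#(non-edges of A[S]) - (ℓ / 20) |S|`: a low-degree
vertex of `A[S]` could be deleted to decrease this potential, and comparing with `S = V(A)` shows
that few vertices are missing from `S`.
-/

namespace BipGraph

variable {V : Type} [DecidableEq V]

def nonEdges (A : BipGraph V) : Finset (V × V) := A.L ×ˢ A.R \ A.E

lemma card_nonEdges_add_e (A : BipGraph V) : A.nonEdges.card + A.e = A.L.card * A.R.card := by
  rw [nonEdges, e, Finset.card_sdiff_add_card_eq_card A.E_sub, Finset.card_product]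

lemma v_eq_card_add_card (A : BipGraph V) : A.v = A.L.card + A.R.card :=
  Finset.card_union_of_disjoint A.disj

lemma induce_verts_self (A : BipGraph V) : A.induce A.verts = A := by
  obtain ⟨L, R, disj, E, E_sub⟩ := A
  simp only [induce, verts, mk.injEq]
  refine ⟨Finset.inter_eq_left.2 Finset.subset_union_left,
    Finset.inter_eq_left.2 Finset.subset_union_right, Finset.filter_true_of_mem fun p hp => ?_⟩
  have hp := Finset.mem_product.1 (E_sub hp)
  exact ⟨Finset.mem_union_left _ hp.1, Finset.mem_union_right _ hp.2⟩

lemma verts_induce (A : BipGraph V) (S : Finset V) : (A.induce S).verts = A.verts ∩ S :=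
  (Finset.union_inter_distrib_right _ _ _).symm

lemma L_induce_erase (A : BipGraph V) (S : Finset V) (x : V) :
    (A.induce (S.erase x)).L = (A.induce S).L.erase x :=
  Finset.inter_erase _ _ _

lemma R_induce_erase (A : BipGraph V) (S : Finset V) (x : V) :
    (A.induce (S.erase x)).R = (A.induce S).R.erase x :=
  Finset.inter_erase _ _ _

lemma v_induce_erase_add_one {A : BipGraph V} {S : Finset V} {x : V}
    (hx : x ∈ (A.induce S).verts) : (A.induce (S.erase x)).v + 1 = (A.induce S).v := by
  rw [verts_induce] at hx
  rw [v, v, verts_induce, verts_induce, Finset.inter_erase, Finset.card_erase_add_one hx]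

lemma e_induce_le_e_induce_erase_add_deg (A : BipGraph V) (S : Finset V) (x : V) :
    (A.induce S).e ≤ (A.induce (S.erase x)).e + (A.induce S).deg x := by
  rw [e, e, deg, ← Finset.card_filter_add_card_filter_not (p := fun p => p.1 = x ∨ p.2 = x),
    add_comm]
  gcongr
  intro p hp
  simp only [induce, Finset.mem_filter, Finset.mem_erase, not_or] at hp ⊢
  tauto

lemma card_mul_card_induce_erase_add_min_le {A : BipGraph V} {S : Finset V} {x : V}
    (hx : x ∈ (A.induce S).verts) :
    (A.induce (S.erase x)).L.card * (A.induce (S.erase x)).R.card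
      + min (A.induce S).L.card (A.induce S).R.card
      ≤ (A.induce S).L.card * (A.induce S).R.card := by
  rw [L_induce_erase, R_induce_erase]
  rcases Finset.mem_union.1 hx with hL | hR
  · rw [Finset.erase_eq_of_notMem (Finset.disjoint_left.1 (A.induce S).disj hL),
      ← Finset.card_erase_add_one hL]
    have := min_le_right (((A.induce S).L.erase x).card + 1) (A.induce S).R.card
    nlinarith
  · rw [Finset.erase_eq_of_notMem (Finset.disjoint_right.1 (A.induce S).disj hR),
      ← Finset.card_erase_add_one hR]
    have := min_le_left (A.induce S).L.card (((A.induce S).R.erase x).card + 1)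
    nlinarith

lemma card_nonEdges_induce_erase_add_min_le {A : BipGraph V} {S : Finset V} {x : V}
    (hx : x ∈ (A.induce S).verts) :
    (A.induce (S.erase x)).nonEdges.card + min (A.induce S).L.card (A.induce S).R.card
      ≤ (A.induce S).nonEdges.card + (A.induce S).deg x := by
  have h₁ := card_nonEdges_add_e (A.induce S)
  have h₂ := card_nonEdges_add_e (A.induce (S.erase x))
  have h₃ := e_induce_le_e_induce_erase_add_deg A S x
  have h₄ := card_mul_card_induce_erase_add_min_le hx
  omega

theorem exists_induce_forall_min_card_le_deg_add (A : BipGraph V) (c : ℝ) :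
    ∃ S : Finset V, c * (A.v - (A.induce S).v) ≤ A.nonEdges.card ∧
      ∀ x ∈ (A.induce S).verts,
        (min (A.induce S).L.card (A.induce S).R.card : ℝ) ≤ (A.induce S).deg x + c := by
  obtain ⟨S, hS, hmin⟩ := A.verts.powerset.exists_min_image
    (fun S => ((A.induce S).nonEdges.card : ℝ) - c * (A.induce S).v)
    ⟨A.verts, Finset.mem_powerset_self _⟩
  refine ⟨S, ?_, fun x hx => ?_⟩
  · have h := hmin A.verts (Finset.mem_powerset_self _)
    rw [induce_verts_self] at h
    have : (0 : ℝ) ≤ (A.induce S).nonEdges.card := Nat.cast_nonneg _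
    linarith
  · by_contra! hlt
    have h := hmin (S.erase x)
      (Finset.mem_powerset.2 ((Finset.erase_subset x S).trans (Finset.mem_powerset.1 hS)))
    have hdel : ((A.induce (S.erase x)).nonEdges.card : ℝ)
        + min ((A.induce S).L.card : ℝ) (A.induce S).R.card
        ≤ (A.induce S).nonEdges.card + (A.induce S).deg x := by
      exact_mod_cast card_nonEdges_induce_erase_add_min_le hx
    have hv : ((A.induce (S.erase x)).v : ℝ) + 1 = (A.induce S).v := by
      exact_mod_cast v_induce_erase_add_one hx
    rw [← hv, mul_add_one] at h
    linarith

end BipGraph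

lemma sub_div_le_of_add_le_of_sq_sub_le_mul {a b ℓ N : ℝ} (ha : 0 ≤ a) (hN : 0 ≤ N)
    (hℓ : 10 ^ 5 * (N + 1) ≤ ℓ) (hsum : a + b ≤ 2 * ℓ + N) (hprod : ℓ ^ 2 - N ≤ a * b) :
    ℓ - ℓ / 200 ≤ a := by
  have hsq : (ℓ - a) ^ 2 ≤ (a + 1) * N := by
    nlinarith [mul_le_mul_of_nonneg_left (show b ≤ 2 * ℓ + N - a by linarith) ha]
  by_contra! h
  nlinarith [mul_le_mul_of_nonneg_right h.le hN]

lemma mul_sub_le_of_add_le {a b ℓ N : ℝ} (ha : 0 ≤ a) (hb : 0 ≤ b)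
    (hℓ : 10 ^ 5 * (N + 1) ≤ ℓ) (hsum : a + b ≤ 2 * ℓ + N) :
    a * b - (ℓ ^ 2 - N) ≤ ℓ / 20 * (ℓ / 200) := by
  nlinarith [sq_nonneg (a - b), mul_le_mul hsum hsum (add_nonneg ha hb) (by linarith)]

/-- for every `N` there is `ℓ₀` such that for all `ℓ ≥ ℓ₀`, every
bipartite graph with at most `2ℓ + N` vertices and at least `ℓ² − N` edges contains
an induced subgraph that is almost `ℓ`-complete. -/
theorem almost_complete_subgraph (N : ℕ) :
    ∃ ℓ₀ : ℕ, ∀ ℓ : ℕ, ℓ₀ ≤ ℓ →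
      ∀ (V : Type) [DecidableEq V] (A : BipGraph V),
        A.v ≤ 2 * ℓ + N → (ℓ : ℤ) ^ 2 - (N : ℤ) ≤ (A.e : ℤ) →
        ∃ S : Finset V, BipGraph.AlmostComplete ℓ (A.induce S) := by
  refine ⟨10 ^ 5 * (N + 1), fun ℓ hℓ V _ A hv he => ?_⟩
  obtain ⟨S, hremoved, hdeg⟩ := A.exists_induce_forall_min_card_le_deg_add ((ℓ : ℝ) / 20)
  have hℓ : 10 ^ 5 * ((N : ℝ) + 1) ≤ ℓ := by exact_mod_cast hℓ
  have hsum : (A.L.card : ℝ) + A.R.card ≤ 2 * ℓ + N := by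
    rw [BipGraph.v_eq_card_add_card] at hv; exact_mod_cast hv
  have hprod : (ℓ : ℝ) ^ 2 - N ≤ A.L.card * A.R.card - A.nonEdges.card := by
    have hcount : (A.nonEdges.card : ℝ) + A.e = A.L.card * A.R.card := by
      exact_mod_cast A.card_nonEdges_add_e
    have he : (ℓ : ℝ) ^ 2 - N ≤ A.e := by exact_mod_cast he
    linarith
  have hnon : (0 : ℝ) ≤ A.nonEdges.card := Nat.cast_nonneg _
  have hL := sub_div_le_of_add_le_of_sq_sub_le_mul (by positivity) N.cast_nonneg hℓ hsum
    (by linarith : (ℓ : ℝ) ^ 2 - N ≤ A.L.card * A.R.card)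
  have hR := sub_div_le_of_add_le_of_sq_sub_le_mul (by positivity) N.cast_nonneg hℓ
    (by linarith : (A.R.card : ℝ) + A.L.card ≤ 2 * ℓ + N)
    (by linarith [mul_comm (A.L.card : ℝ) A.R.card])
  have hmissing := mul_sub_le_of_add_le (by positivity) (by positivity) hℓ hsum
  have hfew : (A.v : ℝ) - (A.induce S).v ≤ ℓ / 200 :=
    le_of_mul_le_mul_left (by linarith) (show (0 : ℝ) < ℓ / 20 by linarith)
  rw [BipGraph.v_eq_card_add_card, BipGraph.v_eq_card_add_card] at hfew
  push_cast at hfew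
  have hLS : ((A.induce S).L.card : ℝ) ≤ A.L.card := by
    exact_mod_cast Finset.card_le_card Finset.inter_subset_left
  have hRS : ((A.induce S).R.card : ℝ) ≤ A.R.card := by
    exact_mod_cast Finset.card_le_card Finset.inter_subset_left
  refine ⟨S, ?_, ?_, fun x hx => ?_⟩
  · rw [abs_le]; constructor <;> linarith
  · rw [abs_le]; constructor <;> linarith
  · have := hdeg x hx
    have : (ℓ : ℝ) - ℓ / 100 ≤ min ((A.induce S).L.card : ℝ) (A.induce S).R.card :=
      le_min (by linarith) (by linarith)
    linarith
end
end

section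
/- For every natural number W there exists ℓ₀ ∈ ℕ such that for all ℓ ≥ ℓ₀: every bipartite graph A with k(A) ≤ 2ℓ + W and e(A) ≥ ℓ² contains a subgraph (a subset of its vertices together with all edges of A between them) that is almost ℓ-complete. -/
noncomputable section

/-!
Let `S` be a largest connected component of `A` and `r = k(A) - (|S| - 1)` the contribution of the
other components. A component with `n` vertices has at most `n(n - 1)/2 ≤ |S|(n - 1)/2` edges, so
`ℓ² ≤ e(A) ≤ e(S) + |S| r / 2`, while `|S| + r ≤ 2ℓ + W + 1`. Since `e(S) ≤ |S|²/4`, this forces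
`r² ≤ 4ℓ(W + 1) + (W + 1)²`, so `r` is negligible and `S` is a bipartite graph whose sides are
within `ℓ/200` of `ℓ` and which misses at most `ℓ²/10⁶` of its possible edges. Each vertex of `S`
of degree at most `0.95ℓ` misses at least `0.045ℓ` edges, so there are at most `ℓ/20000` of them,
and deleting them leaves an almost `ℓ`-complete graph.
-/

open Finset

lemma dense_bipartite_bounds {a b r e ℓ w : ℝ} (ha : 0 ≤ a) (hb : 0 ≤ b) (hr : 0 ≤ r)
    (hw : 0 ≤ w) (hℓ : 10 ^ 16 * w ≤ ℓ) (hsize : a + b + r ≤ 2 * ℓ + w)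
    (hedges : 2 * ℓ ^ 2 ≤ 2 * e + (a + b) * r) (he : e ≤ a * b) :
    |a - ℓ| ≤ ℓ / 200 ∧ |b - ℓ| ≤ ℓ / 200 ∧ a * b - e ≤ ℓ ^ 2 / 10 ^ 6 := by
  have hab : 4 * (a * b) ≤ (a + b) ^ 2 := by nlinarith [sq_nonneg (a - b)]
  -- (a + b + r) ^ 2 ≥ 4 * a * b + 2 * (a + b) * r + r ^ 2 ≥ 4 * ℓ ^ 2 + r ^ 2
  have hr2 : r ^ 2 ≤ 4 * ℓ * w + w ^ 2 := by
    nlinarith [mul_le_mul hsize hsize (by positivity) (by linarith)]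
  have hrℓ : r ≤ ℓ / 10 ^ 7 := by nlinarith
  have he' : ℓ ^ 2 * (1 - 2 / 10 ^ 7) ≤ e := by nlinarith
  have hnear : ∀ x y : ℝ, 0 ≤ x → 0 ≤ y → x + y ≤ 2 * ℓ + w →
      ℓ ^ 2 * (1 - 2 / 10 ^ 7) ≤ x * y → |x - ℓ| ≤ ℓ / 200 := by
    intro x y hx hy hxy hprod
    have hxy' : x * y ≤ x * (2 * ℓ + w - x) := mul_le_mul_of_nonneg_left (by linarith) hx
    rw [abs_le]
    constructor
    · by_contra! hlt
      have hgap : (ℓ / 200) ^ 2 < (ℓ - x) ^ 2 := by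
        exact pow_lt_pow_left₀ (by linarith) (by linarith) two_ne_zero
      nlinarith [mul_le_mul_of_nonneg_right (show x ≤ ℓ by linarith) hw]
    · nlinarith
  refine ⟨hnear a b ha hb (by linarith) (by linarith), hnear b a hb ha (by linarith) (by linarith),
    ?_⟩
  nlinarith

lemma Finset.card_filter_le_mul_sub_le {α : Type*} (s : Finset α) (f : α → ℝ) {m : ℝ}
    (hf : ∀ a ∈ s, f a ≤ m) (t : ℝ) :
    #{a ∈ s | f a ≤ t} * (m - t) ≤ #s * m - ∑ a ∈ s, f a := by
  calc #{a ∈ s | f a ≤ t} * (m - t) = ∑ a ∈ s with f a ≤ t, (m - t) := by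
        rw [sum_const, nsmul_eq_mul]
    _ ≤ ∑ a ∈ s with f a ≤ t, (m - f a) := sum_le_sum fun a ha => by
        linarith [(mem_filter.mp ha).2]
    _ ≤ ∑ a ∈ s, (m - f a) :=
        sum_le_sum_of_subset_of_nonneg (filter_subset _ _) fun a ha _ => by linarith [hf a ha]
    _ = #s * m - ∑ a ∈ s, f a := by rw [sum_sub_distrib, sum_const, nsmul_eq_mul]

namespace BipGraph

variable {V : Type} [DecidableEq V] (B : BipGraph V)

lemma mem_L_R_of_mem_E {p : V × V} (hp : p ∈ B.E) : p.1 ∈ B.L ∧ p.2 ∈ B.R :=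
  mem_product.mp (B.E_sub hp)

lemma v_eq_card_L_add_card_R : B.v = #B.L + #B.R := card_union_of_disjoint B.disj

lemma e_le_card_L_mul_card_R : B.e ≤ #B.L * #B.R := card_product B.L B.R ▸ card_le_card B.E_sub

lemma two_mul_e_le : 2 * B.e ≤ B.v * (B.v - 1) := by
  have h := B.e_le_card_L_mul_card_R
  rw [B.v_eq_card_L_add_card_R]
  rcases Nat.eq_zero_or_pos (#B.L + #B.R) with h0 | h0
  · simp_all
  have := Nat.le_mul_self #B.L
  have := Nat.le_mul_self #B.R
  zify [h0] at *
  nlinarith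

lemma deg_of_mem_L {x : V} (hx : x ∈ B.L) : B.deg x = #{y ∈ B.R | (x, y) ∈ B.E} := by
  have hsnd : ∀ p ∈ B.E, p.2 ≠ x := fun p hp h =>
    disjoint_left.mp B.disj hx (h ▸ (B.mem_L_R_of_mem_E hp).2)
  refine card_nbij' Prod.snd (fun y => (x, y)) (fun p hp => ?_) (fun y hy => ?_)
    (fun p hp => ?_) (fun y _ => rfl)
  all_goals simp only [coe_filter, Set.mem_ofPred_eq] at *
  · have h1 : p.1 = x := hp.2.resolve_right (hsnd p hp.1)
    exact ⟨(B.mem_L_R_of_mem_E hp.1).2, h1 ▸ hp.1⟩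
  · simpa using hy.2
  · exact Prod.ext (hp.2.resolve_right (hsnd p hp.1)).symm rfl

lemma deg_of_mem_R {x : V} (hx : x ∈ B.R) : B.deg x = #{y ∈ B.L | (y, x) ∈ B.E} := by
  have hfst : ∀ p ∈ B.E, p.1 ≠ x := fun p hp h =>
    disjoint_right.mp B.disj hx (h ▸ (B.mem_L_R_of_mem_E hp).1)
  refine card_nbij' Prod.fst (fun y => (y, x)) (fun p hp => ?_) (fun y hy => ?_)
    (fun p hp => ?_) (fun y _ => rfl)
  all_goals simp only [coe_filter, Set.mem_ofPred_eq] at *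
  · have h2 : p.2 = x := hp.2.resolve_left (hfst p hp.1)
    exact ⟨(B.mem_L_R_of_mem_E hp.1).1, h2 ▸ hp.1⟩
  · simpa using hy.2
  · exact Prod.ext rfl (hp.2.resolve_left (hfst p hp.1)).symm

lemma e_eq_card_filter_product : B.e = #{p ∈ B.L ×ˢ B.R | p ∈ B.E} := by
  rw [filter_mem_eq_inter, inter_eq_right.mpr B.E_sub]
  rfl

lemma sum_deg_L : ∑ x ∈ B.L, B.deg x = B.e := by
  rw [sum_congr rfl fun x hx => B.deg_of_mem_L hx, e_eq_card_filter_product, card_filter,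
    sum_product]
  simp only [card_filter]

lemma sum_deg_R : ∑ y ∈ B.R, B.deg y = B.e := by
  rw [sum_congr rfl fun y hy => B.deg_of_mem_R hy, e_eq_card_filter_product, card_filter,
    sum_product_right]
  simp only [card_filter]

lemma deg_le_card_R {x : V} (hx : x ∈ B.L) : B.deg x ≤ #B.R :=
  B.deg_of_mem_L hx ▸ card_filter_le _ _

lemma deg_le_card_L {y : V} (hy : y ∈ B.R) : B.deg y ≤ #B.L :=
  B.deg_of_mem_R hy ▸ card_filter_le _ _

lemma card_filter_deg_le_mul_L (t : ℝ) :
    #{x ∈ B.L | (B.deg x : ℝ) ≤ t} * (#B.R - t) ≤ #B.L * #B.R - B.e := by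
  have h := B.L.card_filter_le_mul_sub_le (fun x => (B.deg x : ℝ)) (m := #B.R)
    (fun x hx => by exact_mod_cast B.deg_le_card_R hx) t
  rwa [← Nat.cast_sum, B.sum_deg_L] at h

lemma card_filter_deg_le_mul_R (t : ℝ) :
    #{y ∈ B.R | (B.deg y : ℝ) ≤ t} * (#B.L - t) ≤ #B.L * #B.R - B.e := by
  have h := B.R.card_filter_le_mul_sub_le (fun y => (B.deg y : ℝ)) (m := #B.L)
    (fun y hy => by exact_mod_cast B.deg_le_card_L hy) t
  rwa [← Nat.cast_sum, B.sum_deg_R, mul_comm (#B.R : ℝ)] at h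

@[simp] lemma induce_L (S : Finset V) : (B.induce S).L = B.L ∩ S := rfl

@[simp] lemma induce_R (S : Finset V) : (B.induce S).R = B.R ∩ S := rfl

lemma mem_induce_E {S : Finset V} {p : V × V} :
    p ∈ (B.induce S).E ↔ p ∈ B.E ∧ p.1 ∈ S ∧ p.2 ∈ S := mem_filter

lemma induce_induce (S T : Finset V) : (B.induce S).induce T = B.induce (S ∩ T) := by
  simp only [induce, inter_assoc, filter_filter, mem_inter, and_and_and_comm]

lemma v_induce_of_subset {S : Finset V} (hS : S ⊆ B.verts) : (B.induce S).v = #S := by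
  rw [v, verts, induce_L, induce_R, ← union_inter_distrib_right]
  exact congrArg card (inter_eq_right.mpr hS)

lemma deg_le_deg_induce_add_card_sdiff {S : Finset V} {x : V} (hx : x ∈ (B.induce S).verts) :
    B.deg x ≤ (B.induce S).deg x + #(B.verts \ S) := by
  have hsplit : ∀ (X : Finset V) (P P' : V → Prop) [DecidablePred P] [DecidablePred P'],
      X ⊆ B.verts → (∀ y ∈ S, P y → P' y) →
      #{y ∈ X | P y} ≤ #{y ∈ X ∩ S | P' y} + #(B.verts \ S) := by
    intro X P P' _ _ hX hPP'
    refine (card_le_card fun y hy => ?_).trans (card_union_le _ _)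
    obtain ⟨hyX, hyP⟩ := mem_filter.mp hy
    by_cases hyS : y ∈ S
    · exact mem_union_left _ (mem_filter.mpr ⟨mem_inter.mpr ⟨hyX, hyS⟩, hPP' y hyS hyP⟩)
    · exact mem_union_right _ (mem_sdiff.mpr ⟨hX hyX, hyS⟩)
  rcases mem_union.mp hx with hxL | hxR
  · rw [B.deg_of_mem_L (mem_inter.mp hxL).1, (B.induce S).deg_of_mem_L hxL]
    exact hsplit _ _ _ subset_union_right fun y hy hxy =>
      B.mem_induce_E.mpr ⟨hxy, (mem_inter.mp hxL).2, hy⟩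
  · rw [B.deg_of_mem_R (mem_inter.mp hxR).1, (B.induce S).deg_of_mem_R hxR]
    exact hsplit _ _ _ subset_union_left fun y hy hyx =>
      B.mem_induce_E.mpr ⟨hyx, hy, (mem_inter.mp hxR).2⟩

lemma card_filter_deg_le_le {ℓ : ℕ} (hL : |(#B.L : ℝ) - ℓ| ≤ ℓ / 200)
    (hR : |(#B.R : ℝ) - ℓ| ≤ ℓ / 200) (hmiss : (#B.L * #B.R : ℝ) - B.e ≤ ℓ ^ 2 / 10 ^ 6) :
    (#{x ∈ B.verts | (B.deg x : ℝ) ≤ 19 / 20 * ℓ} : ℝ) ≤ ℓ / 20000 := by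
  rw [abs_le] at hL hR
  have hlowL := B.card_filter_deg_le_mul_L (19 / 20 * ℓ)
  have hlowR := B.card_filter_deg_le_mul_R (19 / 20 * ℓ)
  have hcL : (#{x ∈ B.L | (B.deg x : ℝ) ≤ 19 / 20 * ℓ} : ℝ) ≤ #B.L := by
    exact_mod_cast card_filter_le _ _
  have hcR : (#{y ∈ B.R | (B.deg y : ℝ) ≤ 19 / 20 * ℓ} : ℝ) ≤ #B.R := by
    exact_mod_cast card_filter_le _ _
  have hunion : (#{x ∈ B.verts | (B.deg x : ℝ) ≤ 19 / 20 * ℓ} : ℝ) ≤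
      #{x ∈ B.L | (B.deg x : ℝ) ≤ 19 / 20 * ℓ} + #{y ∈ B.R | (B.deg y : ℝ) ≤ 19 / 20 * ℓ} := by
    rw [verts, filter_union]
    exact_mod_cast card_union_le _ _
  nlinarith

lemma almostComplete_induce_of_few_missing {ℓ : ℕ} (hL : |(#B.L : ℝ) - ℓ| ≤ ℓ / 200)
    (hR : |(#B.R : ℝ) - ℓ| ≤ ℓ / 200) (hmiss : (#B.L * #B.R : ℝ) - B.e ≤ ℓ ^ 2 / 10 ^ 6) :
    AlmostComplete ℓ (B.induce {x ∈ B.verts | 19 / 20 * (ℓ : ℝ) < B.deg x}) := by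
  set T := {x ∈ B.verts | 19 / 20 * (ℓ : ℝ) < B.deg x}
  have hbad : (#(B.verts \ T) : ℝ) ≤ ℓ / 20000 := by
    simpa only [T, ← filter_not, not_lt] using B.card_filter_deg_le_le hL hR hmiss
  have hpart : ∀ X ⊆ B.verts, (#X : ℝ) ≤ #(X ∩ T) + #(B.verts \ T) := by
    intro X hX
    rw [← card_inter_add_card_sdiff X T]
    exact_mod_cast Nat.add_le_add_left (card_le_card (sdiff_subset_sdiff hX le_rfl)) _
  have hL' := hpart B.L subset_union_left
  have hR' := hpart B.R subset_union_right
  have hL'' : (#(B.L ∩ T) : ℝ) ≤ #B.L := by exact_mod_cast card_le_card inter_subset_left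
  have hR'' : (#(B.R ∩ T) : ℝ) ≤ #B.R := by exact_mod_cast card_le_card inter_subset_left
  rw [abs_le] at hL hR
  refine ⟨abs_le.mpr ⟨?_, ?_⟩, abs_le.mpr ⟨?_, ?_⟩, fun x hx => ?_⟩
  any_goals simp only [induce_L, induce_R]; linarith
  have hxT : x ∈ T := by rcases mem_union.mp hx with h | h <;> exact (mem_inter.mp h).2
  have hdrop : (B.deg x : ℝ) ≤ (B.induce T).deg x + #(B.verts \ T) := by
    exact_mod_cast B.deg_le_deg_induce_add_card_sdiff hx
  have hdeg := (mem_filter.mp hxT).2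
  norm_num at hdeg ⊢
  linarith

instance : DecidableRel B.graph.Adj := fun x y =>
  inferInstanceAs (Decidable ((x.1, y.1) ∈ B.E ∨ (y.1, x.1) ∈ B.E))

def compVerts (c : B.graph.ConnectedComponent) : Finset V :=
  c.supp.toFinset.map (.subtype _)

lemma mem_compVerts {c : B.graph.ConnectedComponent} {x : V} :
    x ∈ B.compVerts c ↔ ∃ h : x ∈ B.verts, B.graph.connectedComponentMk ⟨x, h⟩ = c := by
  simp [compVerts, SimpleGraph.ConnectedComponent.mem_supp_iff]

lemma compVerts_subset (c : B.graph.ConnectedComponent) : B.compVerts c ⊆ B.verts :=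
  fun _ hx => (B.mem_compVerts.mp hx).1

lemma compVerts_nonempty (c : B.graph.ConnectedComponent) : (B.compVerts c).Nonempty := by
  obtain ⟨x, rfl⟩ := c.exists_rep
  exact ⟨x, B.mem_compVerts.mpr ⟨x.2, rfl⟩⟩

lemma pairwiseDisjoint_compVerts :
    Set.PairwiseDisjoint ↑(univ : Finset B.graph.ConnectedComponent) B.compVerts := by
  intro c _ d _ hcd
  refine disjoint_left.mpr fun x hxc hxd => hcd ?_
  obtain ⟨_, rfl⟩ := B.mem_compVerts.mp hxc
  exact (B.mem_compVerts.mp hxd).2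

lemma biUnion_compVerts : univ.biUnion B.compVerts = B.verts :=
  Subset.antisymm (biUnion_subset.mpr fun c _ => B.compVerts_subset c) fun _ hx =>
    mem_biUnion.mpr ⟨_, mem_univ _, B.mem_compVerts.mpr ⟨hx, rfl⟩⟩

lemma fst_mem_compVerts_iff {p : V × V} (hp : p ∈ B.E) (c : B.graph.ConnectedComponent) :
    p.1 ∈ B.compVerts c ↔ p.2 ∈ B.compVerts c := by
  have h1 : p.1 ∈ B.verts := mem_union_left _ (B.mem_L_R_of_mem_E hp).1
  have h2 : p.2 ∈ B.verts := mem_union_right _ (B.mem_L_R_of_mem_E hp).2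
  have hadj : B.graph.Adj ⟨p.1, h1⟩ ⟨p.2, h2⟩ := Or.inl hp
  simp only [mem_compVerts, h1, h2, exists_true_left,
    SimpleGraph.ConnectedComponent.eq.mpr hadj.reachable]

lemma v_eq_sum_card_compVerts : B.v = ∑ c, #(B.compVerts c) := by
  have h := card_biUnion B.pairwiseDisjoint_compVerts
  rwa [biUnion_compVerts] at h

lemma k_eq_sum_card_compVerts_sub_one : B.k = ∑ c, (#(B.compVerts c) - 1) := by
  rw [k, CC, Nat.card_eq_fintype_card, ← card_univ, card_eq_sum_ones,
    sum_tsub_distrib _ fun c _ => (B.compVerts_nonempty c).card_pos, v_eq_sum_card_compVerts]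

lemma e_eq_sum_e_induce_compVerts : B.e = ∑ c, (B.induce (B.compVerts c)).e := by
  have hcover : univ.biUnion (fun c => (B.induce (B.compVerts c)).E) = B.E := by
    refine Subset.antisymm (biUnion_subset.mpr fun c _ => filter_subset _ _) fun p hp => ?_
    obtain ⟨c, -, hc⟩ := mem_biUnion.mp ((B.biUnion_compVerts).symm ▸
      mem_union_left _ (B.mem_L_R_of_mem_E hp).1 : p.1 ∈ univ.biUnion B.compVerts)
    exact mem_biUnion.mpr ⟨c, mem_univ _,
      B.mem_induce_E.mpr ⟨hp, hc, (B.fst_mem_compVerts_iff hp c).mp hc⟩⟩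
  rw [e, ← hcover, card_biUnion]
  · rfl
  · intro c _ d _ hcd
    exact disjoint_left.mpr fun p hpc hpd =>
      disjoint_left.mp (B.pairwiseDisjoint_compVerts (by simp) (by simp) hcd)
        (B.mem_induce_E.mp hpc).2.1 (B.mem_induce_E.mp hpd).2.1

lemma exists_subset_k_eq_and_two_mul_e_le :
    ∃ S ⊆ B.verts, ∃ r, B.k = #S - 1 + r ∧ 2 * B.e ≤ 2 * (B.induce S).e + #S * r := by
  classical
  rcases isEmpty_or_nonempty B.graph.ConnectedComponent with hC | hC
  · refine ⟨∅, empty_subset _, 0, ?_, ?_⟩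
    · rw [k_eq_sum_card_compVerts_sub_one, univ_eq_empty, sum_empty]
      rfl
    · rw [e_eq_sum_e_induce_compVerts, univ_eq_empty, sum_empty]
      exact Nat.zero_le _
  obtain ⟨cm, -, hmax⟩ := exists_max_image univ (fun c => #(B.compVerts c)) univ_nonempty
  have hcomp (c) :
      2 * (B.induce (B.compVerts c)).e ≤ #(B.compVerts c) * (#(B.compVerts c) - 1) := by
    have h := (B.induce (B.compVerts c)).two_mul_e_le
    rwa [v_induce_of_subset _ (B.compVerts_subset c)] at h
  refine ⟨B.compVerts cm, B.compVerts_subset cm, ∑ c ∈ univ.erase cm, (#(B.compVerts c) - 1),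
    ?_, ?_⟩
  · rw [k_eq_sum_card_compVerts_sub_one, ← add_sum_erase _ _ (mem_univ cm)]
  · rw [e_eq_sum_e_induce_compVerts, mul_sum, mul_sum, ← add_sum_erase _ _ (mem_univ cm)]
    refine Nat.add_le_add_left (sum_le_sum fun c _ => ?_) _
    exact (hcomp c).trans (Nat.mul_le_mul_right _ (hmax c (mem_univ c)))

end BipGraph

/-- for every `W` there is `ℓ₀` such that for all `ℓ ≥ ℓ₀`, every
bipartite graph `A` with `k(A) ≤ 2ℓ + W` and `e(A) ≥ ℓ²` contains an induced
subgraph that is almost `ℓ`-complete. -/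
theorem almost_complete_subgraph_of_k (W : ℕ) :
    ∃ ℓ₀ : ℕ, ∀ ℓ : ℕ, ℓ₀ ≤ ℓ →
      ∀ (V : Type) [DecidableEq V] (A : BipGraph V),
        A.k ≤ 2 * ℓ + W → ℓ ^ 2 ≤ A.e →
        ∃ S : Finset V, BipGraph.AlmostComplete ℓ (A.induce S) := by
  refine ⟨10 ^ 16 * (W + 1), fun ℓ hℓ V _ A hk he => ?_⟩
  obtain ⟨S, hS, r, hkS, heS⟩ := A.exists_subset_k_eq_and_two_mul_e_le
  set B := A.induce S
  have hv : #B.L + #B.R = #S := B.v_eq_card_L_add_card_R ▸ A.v_induce_of_subset hS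
  have hsize : #B.L + #B.R + r ≤ 2 * ℓ + (W + 1) := by omega
  have hedges : 2 * ℓ ^ 2 ≤ 2 * B.e + (#B.L + #B.R) * r :=
    hv ▸ (Nat.mul_le_mul_left 2 he).trans heS
  obtain ⟨hL, hR, hmiss⟩ := dense_bipartite_bounds (a := #B.L) (b := #B.R) (r := r) (e := B.e)
    (ℓ := ℓ) (w := W + 1) (by positivity) (by positivity) (by positivity) (by positivity)
    (by exact_mod_cast hℓ) (by exact_mod_cast hsize) (by exact_mod_cast hedges)
    (by exact_mod_cast B.e_le_card_L_mul_card_R)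
  exact ⟨_, A.induce_induce S _ ▸ B.almostComplete_induce_of_few_missing hL hR hmiss⟩
end
end

section
/- For every tree T and every integer m ≥ 1, a set X of vertices of G^[m]_T is a complete 7m×7m bipartite subgraph of G^[m]_T if and only if X = B(η) for some η ∈ T. -/
noncomputable section

/-- A tree: a nonempty set of finite sequences of ordinals closed under
initial segments (prefixes). -/
def IsOrdTree (T : Set (List Ordinal)) : Prop :=
  T.Nonempty ∧ ∀ l ∈ T, ∀ l', l' <+: l → l' ∈ T

/-- the nodes of a tree `T` -/
abbrev Node (T : Set (List Ordinal)) := {η : List Ordinal // η ∈ T}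

/-- the vertices of `preG^[m]_T`: triples `(η, i, n)` with `η ∈ T`, `i < m`, `n < 14` -/
abbrev PreV (T : Set (List Ordinal)) (m : ℕ) := Node T × Fin m × Fin 14

/-- the relation `E₀` on the vertices of `preG^[m]_T` -/
def E0 {T : Set (List Ordinal)} {m : ℕ} (p q : PreV T m) : Prop :=
  p.1.1 <+: q.1.1 ∧ q.1.1.length = p.1.1.length + 1 ∧
  p.2.1 = q.2.1 ∧ p.2.2 = q.2.2 ∧
  ((p.1.1.length = 0 ∧ (p.2.2.1 = 0 ∨ p.2.2.1 = 1)) ∨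
   (0 < p.1.1.length ∧ (p.2.2.1 = 10 ∨ p.2.2.1 = 11 ∨ p.2.2.1 = 12 ∨ p.2.2.1 = 13)))

/-- the vertices of `G^[m]_T`: the classes of the smallest equivalence relation
containing `E₀` (i.e. the quotient by the equivalence closure of `E₀`). -/
def GVert (T : Set (List Ordinal)) (m : ℕ) : Type _ := Quot (@E0 T m)

/-- the `E`-class of a vertex of `preG^[m]_T` -/
def cls {T : Set (List Ordinal)} {m : ℕ} (p : PreV T m) : GVert T m := Quot.mk _ p

/-- a vertex of `G^[m]_T` is on the left if it contains a triple `(η,i,n)` with `n` odd -/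
def IsLeftV {T : Set (List Ordinal)} {m : ℕ} (g : GVert T m) : Prop :=
  ∃ p : PreV T m, cls p = g ∧ p.2.2.1 % 2 = 1

/-- a vertex of `G^[m]_T` is on the right if it contains a triple `(η,i,n)` with `n` even -/
def IsRightV {T : Set (List Ordinal)} {m : ℕ} (g : GVert T m) : Prop :=
  ∃ p : PreV T m, cls p = g ∧ p.2.2.1 % 2 = 0

/-- two vertices of `G^[m]_T` are adjacent iff they have representatives that are
adjacent in `preG^[m]_T`, i.e. representatives `(η,i₁,n₁)`, `(η,i₂,n₂)` with the same
`η` and `n₁ + n₂` odd. -/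
def GAdj {T : Set (List Ordinal)} {m : ℕ} (g h : GVert T m) : Prop :=
  ∃ p q : PreV T m, cls p = g ∧ cls q = h ∧ p.1 = q.1 ∧ (p.2.2.1 + q.2.2.1) % 2 = 1

/-- `B(η)`: the set of classes containing some triple `(η, i, n)` -/
def Bset {T : Set (List Ordinal)} (m : ℕ) (η : Node T) : Set (GVert T m) :=
  {g | ∃ (i : Fin m) (n : Fin 14), cls (η, i, n) = g}

/-- `X` is a complete `a × b` bipartite subgraph of `G^[m]_T`: its left part has
size `a`, its right part has size `b`, and every left-right pair from `X` is adjacent. -/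
def IsCompleteBip {T : Set (List Ordinal)} {m : ℕ} (a b : ℕ) (X : Set (GVert T m)) : Prop :=
  {g ∈ X | IsLeftV g}.ncard = a ∧ {g ∈ X | IsRightV g}.ncard = b ∧
  ∀ g ∈ X, ∀ h ∈ X, IsLeftV g → IsRightV h → GAdj g h

section Aux

variable {T : Set (List Ordinal)} {m : ℕ}

/-- canonical node of the `E`-class of `(η, i, n)` -/
def key (n : Fin 14) (η : List Ordinal) : List Ordinal :=
  if n.1 ≤ 1 ∧ η.length ≤ 1 then []
  else if 10 ≤ n.1 ∧ 1 ≤ η.length then η.take 1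
  else η

lemma key_low {n : Fin 14} {η : List Ordinal} (h1 : n.1 ≤ 1) (h2 : η.length ≤ 1) :
    key n η = [] := if_pos ⟨h1, h2⟩

lemma key_high {n : Fin 14} {η : List Ordinal} (h1 : 10 ≤ n.1) (h2 : 1 ≤ η.length) :
    key n η = η.take 1 := by
  unfold key; rw [if_neg (by omega), if_pos ⟨h1, h2⟩]

lemma key_self_mid {n : Fin 14} {η : List Ordinal} (h1 : 2 ≤ n.1) (h2 : n.1 ≤ 9) :
    key n η = η := by
  unfold key; rw [if_neg (by omega), if_neg (by omega)]

lemma key_self_low {n : Fin 14} {η : List Ordinal} (h1 : n.1 ≤ 1) (h2 : 2 ≤ η.length) :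
    key n η = η := by
  unfold key; rw [if_neg (by omega), if_neg (by omega)]

lemma key_nil (n : Fin 14) : key n [] = [] := by
  unfold key; split_ifs <;> simp

lemma key_prefix (n : Fin 14) (η : List Ordinal) : key n η <+: η := by
  unfold key; split_ifs
  · exact List.nil_prefix
  · exact List.take_prefix _ _
  · exact List.prefix_refl _

lemma E0_snd_eq {p q : PreV T m} (h : E0 p q) : p.2 = q.2 := Prod.ext h.2.2.1 h.2.2.2.1

lemma E0_key_eq {p q : PreV T m} (h : E0 p q) :
    key p.2.2 p.1.1 = key p.2.2 q.1.1 := by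
  obtain ⟨hpre, hlen, hi, hn, hcase | hcase⟩ := h
  · have hn1 : p.2.2.1 ≤ 1 := by omega
    rw [key_low hn1 (by omega), key_low hn1 (by omega)]
  · have hn10 : 10 ≤ p.2.2.1 := by omega
    rw [key_high hn10 (by omega), key_high hn10 (by omega)]
    obtain ⟨t, ht⟩ := hpre
    rw [← ht, List.take_append_of_le_length (by omega)]

/-- the `(i,n)`-data of a class -/
def idx : GVert T m → Fin m × Fin 14 :=
  Quot.lift (fun p => p.2) (fun _ _ h => E0_snd_eq h)

/-- the canonical node of a class -/
def nodeKey : GVert T m → List Ordinal :=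
  Quot.lift (fun p => key p.2.2 p.1.1)
    (fun p q h => by
      show key p.2.2 p.1.1 = key q.2.2 q.1.1
      rw [E0_key_eq h, show p.2.2 = q.2.2 from congrArg Prod.snd (E0_snd_eq h)])

@[simp] lemma idx_cls (p : PreV T m) : idx (cls p) = p.2 := rfl

@[simp] lemma nodeKey_cls (p : PreV T m) : nodeKey (cls p) = key p.2.2 p.1.1 := rfl

lemma cls_congr' {l l' : List Ordinal} (hl : l ∈ T) (hl' : l' ∈ T) (h : l = l')
    (i : Fin m) (n : Fin 14) :
    cls ((⟨l, hl⟩ : Node T), i, n) = cls ((⟨l', hl'⟩ : Node T), i, n) := by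
  subst h; rfl

lemma key_mem (hT : IsOrdTree T) {η : List Ordinal} (hη : η ∈ T) (n : Fin 14) :
    key n η ∈ T := hT.2 η hη _ (key_prefix n η)

lemma cls_take_one (hT : IsOrdTree T) (i : Fin m) (n : Fin 14) (hn : 10 ≤ n.1)
    (η : List Ordinal) :
    ∀ (hη : η ∈ T) (_ : η ≠ []),
      cls ((⟨η.take 1, hT.2 η hη _ (List.take_prefix 1 η)⟩ : Node T), i, n)
        = cls (⟨η, hη⟩, i, n) := by
  induction η using List.reverseRecOn with
  | nil => intro _ h1; exact absurd rfl h1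
  | append_singleton l a ih =>
    intro hη _
    by_cases hl : l = []
    · subst hl; rfl
    · have hlpos : 0 < l.length := List.length_pos_iff.2 hl
      have hlT : l ∈ T := hT.2 _ hη l (List.prefix_append l [a])
      have step : cls ((⟨l, hlT⟩ : Node T), i, n) = cls (⟨l ++ [a], hη⟩, i, n) :=
        Quot.sound ⟨List.prefix_append l [a], by simp, rfl, rfl,
          Or.inr ⟨hlpos, by
            show n.1 = 10 ∨ n.1 = 11 ∨ n.1 = 12 ∨ n.1 = 13
            have := n.isLt; omega⟩⟩
      have htake : (l ++ [a]).take 1 = l.take 1 :=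
        List.take_append_of_le_length (by omega)
      calc cls ((⟨(l ++ [a]).take 1, hT.2 _ hη _ (List.take_prefix 1 _)⟩ : Node T), i, n)
          = cls ((⟨l.take 1, hT.2 l hlT _ (List.take_prefix 1 l)⟩ : Node T), i, n) :=
            cls_congr' _ _ htake i n
        _ = cls ((⟨l, hlT⟩ : Node T), i, n) := ih hlT hl
        _ = cls (⟨l ++ [a], hη⟩, i, n) := step

lemma cls_key (hT : IsOrdTree T) (η : Node T) (i : Fin m) (n : Fin 14) :
    cls ((⟨key n η.1, key_mem hT η.2 n⟩ : Node T), i, n) = cls (η, i, n) := by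
  obtain ⟨η, hη⟩ := η
  show cls ((⟨key n η, key_mem hT hη n⟩ : Node T), i, n) = cls (⟨η, hη⟩, i, n)
  have hnilT : ([] : List Ordinal) ∈ T := hT.2 η hη [] List.nil_prefix
  by_cases h1 : n.1 ≤ 1 ∧ η.length ≤ 1
  · refine Eq.trans (cls_congr' _ hnilT (key_low h1.1 h1.2) i n) ?_
    by_cases h0 : η = []
    · exact cls_congr' _ _ h0.symm i n
    · refine Quot.sound ⟨List.nil_prefix, ?_, rfl, rfl,
        Or.inl ⟨rfl, by show n.1 = 0 ∨ n.1 = 1; omega⟩⟩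
      show η.length = List.length [] + 1
      have := List.length_pos_iff.2 h0
      simp only [List.length_nil]
      omega
  · by_cases h2 : 10 ≤ n.1 ∧ 1 ≤ η.length
    · refine Eq.trans
        (cls_congr' _ (hT.2 η hη _ (List.take_prefix 1 η)) (key_high h2.1 h2.2) i n) ?_
      exact cls_take_one hT i n h2.1 η hη (by
        intro h; subst h; simp at h2)
    · exact cls_congr' _ _ (by unfold key; rw [if_neg h1, if_neg h2]) i n

lemma cls_eq_iff (hT : IsOrdTree T) {p q : PreV T m} :
    cls p = cls q ↔ p.2 = q.2 ∧ key p.2.2 p.1.1 = key p.2.2 q.1.1 := by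
  constructor
  · intro h
    have h1 : p.2 = q.2 := by
      have := congrArg idx h; simpa using this
    have h2 : key p.2.2 p.1.1 = key q.2.2 q.1.1 := by
      have := congrArg nodeKey h; simpa using this
    refine ⟨h1, ?_⟩
    rw [show p.2.2 = q.2.2 from congrArg Prod.snd h1] at h2 ⊢
    exact h2
  · obtain ⟨ηp, ip, np⟩ := p
    obtain ⟨ηq, iq, nq⟩ := q
    rintro ⟨h2, hk⟩
    rw [Prod.ext_iff] at h2
    obtain ⟨h2a, h2b⟩ := h2
    simp only at h2a h2b hk
    subst h2a; subst h2b
    calc cls (ηp, ip, np)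
        = cls ((⟨key np ηp.1, key_mem hT ηp.2 np⟩ : Node T), ip, np) :=
          (cls_key hT ηp ip np).symm
      _ = cls ((⟨key np ηq.1, key_mem hT ηq.2 np⟩ : Node T), ip, np) :=
          cls_congr' _ _ hk ip np
      _ = cls (ηq, ip, np) := cls_key hT ηq ip np

lemma gvert_ext (hT : IsOrdTree T) {g h : GVert T m}
    (h1 : idx g = idx h) (h2 : nodeKey g = nodeKey h) : g = h := by
  induction g using Quot.ind with | _ p =>
  induction h using Quot.ind with | _ q =>
  refine (cls_eq_iff hT).2 ⟨h1, ?_⟩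
  have h3 : p.2.2 = q.2.2 := congrArg Prod.snd h1
  have h2' : key p.2.2 p.1.1 = key q.2.2 q.1.1 := h2
  rw [h2', h3]

lemma cls_of_key (hT : IsOrdTree T) {g : GVert T m} (η : Node T)
    (h : key (idx g).2 η.1 = nodeKey g) :
    cls (η, (idx g).1, (idx g).2) = g := by
  induction g using Quot.ind with | _ p =>
  exact (cls_eq_iff hT).2 ⟨rfl, h⟩

lemma mem_Bset_iff (hT : IsOrdTree T) (g : GVert T m) (η : Node T) :
    g ∈ Bset m η ↔ key (idx g).2 η.1 = nodeKey g := by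
  constructor
  · rintro ⟨i, n, rfl⟩; rfl
  · intro h; exact ⟨_, _, cls_of_key hT η h⟩

lemma gadj_iff (hT : IsOrdTree T) (g h : GVert T m) :
    GAdj g h ↔ ((idx g).2.1 + (idx h).2.1) % 2 = 1 ∧
      ∃ η : Node T, key (idx g).2 η.1 = nodeKey g ∧ key (idx h).2 η.1 = nodeKey h := by
  constructor
  · rintro ⟨p, q, rfl, rfl, hfst, hpar⟩
    exact ⟨hpar, ⟨p.1, rfl, by rw [nodeKey_cls, idx_cls, hfst]⟩⟩
  · rintro ⟨hpar, η, h1, h2⟩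
    exact ⟨(η, (idx g).1, (idx g).2), (η, (idx h).1, (idx h).2),
      cls_of_key hT η h1, cls_of_key hT η h2, rfl, hpar⟩

lemma isLeft_iff (g : GVert T m) : IsLeftV g ↔ (idx g).2.1 % 2 = 1 := by
  constructor
  · rintro ⟨p, rfl, hp⟩; exact hp
  · intro h
    induction g using Quot.ind with | _ p =>
    exact ⟨p, rfl, h⟩

lemma isRight_iff (g : GVert T m) : IsRightV g ↔ (idx g).2.1 % 2 = 0 := by
  constructor
  · rintro ⟨p, rfl, hp⟩; exact hp
  · intro h
    induction g using Quot.ind with | _ p =>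
    exact ⟨p, rfl, h⟩

lemma key_pt {n : Fin 14} {k : List Ordinal}
    (hsh : (2 ≤ n.1 ∧ n.1 ≤ 9) ∨ (n.1 ≤ 1 ∧ k ≠ []) ∨ (10 ≤ n.1 ∧ k = [])) :
    ∀ η, key n η = k → η = k := by
  intro η hk
  rcases hsh with ⟨h2, h9⟩ | ⟨h1, hne⟩ | ⟨h10, rfl⟩
  · rw [key_self_mid h2 h9] at hk; exact hk
  · by_cases hl : η.length ≤ 1
    · rw [key_low h1 hl] at hk; exact absurd hk.symm hne
    · rw [key_self_low h1 (by omega)] at hk; exact hk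
  · rcases eq_or_ne η [] with rfl | hη
    · rfl
    · rw [key_high h10 (List.length_pos_iff.2 hη)] at hk
      rcases List.take_eq_nil_iff.mp hk with h | h
      · omega
      · exact absurd h hη

lemma key_eq_of_hi {n : Fin 14} {η k : List Ordinal} (hn : 10 ≤ n.1)
    (h : key n η = k) (hk : k ≠ []) : η.take 1 = k ∧ η ≠ [] := by
  rcases eq_or_ne η [] with rfl | hη
  · rw [key_nil] at h; exact absurd h.symm hk
  · rw [key_high hn (List.length_pos_iff.2 hη)] at h; exact ⟨h, hη⟩

lemma two_point {n : Fin 14} {η₁ η₂ : List Ordinal} (hne : η₁ ≠ η₂)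
    (h : key n η₁ = key n η₂) :
    (n.1 ≤ 1 ∧ key n η₁ = []) ∨ (10 ≤ n.1 ∧ η₁.take 1 = η₂.take 1) := by
  rcases (by omega : n.1 ≤ 1 ∨ (2 ≤ n.1 ∧ n.1 ≤ 9) ∨ 10 ≤ n.1) with h1 | ⟨h2, h9⟩ | h10
  · left; refine ⟨h1, ?_⟩
    by_cases hl1 : η₁.length ≤ 1
    · exact key_low h1 hl1
    · exfalso
      by_cases hl2 : η₂.length ≤ 1
      · rw [key_self_low h1 (by omega), key_low h1 hl2] at h
        exact hl1 (by simp [h])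
      · rw [key_self_low h1 (by omega), key_self_low h1 (by omega)] at h
        exact hne h
  · rw [key_self_mid h2 h9, key_self_mid h2 h9] at h; exact absurd h hne
  · right; refine ⟨h10, ?_⟩
    rcases eq_or_ne η₁ [] with rfl | h₁
    · rcases eq_or_ne η₂ [] with rfl | h₂
      · exact absurd rfl hne
      · rw [key_nil, key_high h10 (List.length_pos_iff.2 h₂)] at h
        rcases List.take_eq_nil_iff.mp h.symm with h' | h'
        · omega
        · exact absurd h' h₂
    · rcases eq_or_ne η₂ [] with rfl | h₂
      · rw [key_nil, key_high h10 (List.length_pos_iff.2 h₁)] at h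
        rcases List.take_eq_nil_iff.mp h with h' | h'
        · omega
        · exact absurd h' h₁
      · rw [key_high h10 (List.length_pos_iff.2 h₁), key_high h10 (List.length_pos_iff.2 h₂)] at h
        exact h

lemma ncard_setOf_snd_mem (m : ℕ) (F : Finset (Fin 14)) :
    {p : Fin m × Fin 14 | p.2 ∈ F}.ncard = m * F.card := by
  have : {p : Fin m × Fin 14 | p.2 ∈ F}
      = ((Finset.univ ×ˢ F : Finset (Fin m × Fin 14)) : Set (Fin m × Fin 14)) := by
    ext p; simp
  rw [this, Set.ncard_coe_finset, Finset.card_product, Finset.card_univ, Fintype.card_fin]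

lemma injOn_of_fixed_key (hT : IsOrdTree T) (S : Set (GVert T m)) (k₀ : List Ordinal)
    (h : ∀ g ∈ S, nodeKey g = k₀) : Set.InjOn (idx (T := T) (m := m)) S :=
  fun g hg g' hg' he => gvert_ext hT he (((h g hg)).trans ((h g' hg')).symm)

lemma ncard_le_shape (hT : IsOrdTree T) (S : Set (GVert T m)) (k₀ : List Ordinal)
    (F : Finset (Fin 14)) (h : ∀ g ∈ S, nodeKey g = k₀ ∧ (idx g).2 ∈ F) :
    S.ncard ≤ m * F.card := by
  calc S.ncard = (idx '' S).ncard :=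
        (Set.ncard_image_of_injOn (injOn_of_fixed_key hT S k₀ fun g hg => (h g hg).1)).symm
    _ ≤ {p : Fin m × Fin 14 | p.2 ∈ F}.ncard :=
        Set.ncard_le_ncard (by rintro _ ⟨g, hg, rfl⟩; exact (h g hg).2) (Set.toFinite _)
    _ = m * F.card := ncard_setOf_snd_mem m F

lemma finite_of_fixed_key (hT : IsOrdTree T) (S : Set (GVert T m)) (k₀ : List Ordinal)
    (h : ∀ g ∈ S, nodeKey g = k₀) : S.Finite :=
  Set.Finite.of_finite_image (Set.toFinite _) (injOn_of_fixed_key hT S k₀ h)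

lemma exists_pointlike (hT : IsOrdTree T) (hm : 1 ≤ m) (A B : Set (GVert T m))
    (hA : A.ncard = 7 * m) (hB : B.ncard = 7 * m)
    (hco : ∀ g ∈ A, ∀ h ∈ B, ∃ η : Node T,
      key (idx g).2 η.1 = nodeKey g ∧ key (idx h).2 η.1 = nodeKey h) :
    ∃ g ∈ A, ∀ η, key (idx g).2 η = nodeKey g → η = nodeKey g := by
  by_contra hno
  push_neg at hno
  have hshape : ∀ g ∈ A,
      ((idx g).2.1 ≤ 1 ∧ nodeKey g = []) ∨ (10 ≤ (idx g).2.1 ∧ nodeKey g ≠ []) := by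
    intro g hg
    obtain ⟨η, hk, hne⟩ := hno g hg
    by_contra hc
    refine hne (key_pt ?_ η hk)
    by_cases hn1 : (idx g).2.1 ≤ 1
    · exact Or.inr (Or.inl ⟨hn1, fun hK => hc (Or.inl ⟨hn1, hK⟩)⟩)
    · by_cases hn10 : 10 ≤ (idx g).2.1
      · exact Or.inr (Or.inr ⟨hn10,
          not_not.1 fun hK => hc (Or.inr ⟨hn10, hK⟩)⟩)
      · exact Or.inl ⟨by omega, by omega⟩
  by_cases hkey : ∃ g₁ ∈ A, ∃ g₂ ∈ A,
      10 ≤ (idx g₁).2.1 ∧ 10 ≤ (idx g₂).2.1 ∧ nodeKey g₁ ≠ nodeKey g₂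
  · obtain ⟨g₁, hg₁, g₂, hg₂, hn₁, hn₂, hkk⟩ := hkey
    have hK₁ : nodeKey g₁ ≠ [] := by
      rcases hshape g₁ hg₁ with ⟨h', _⟩ | ⟨_, h'⟩
      · omega
      · exact h'
    have hK₂ : nodeKey g₂ ≠ [] := by
      rcases hshape g₂ hg₂ with ⟨h', _⟩ | ⟨_, h'⟩
      · omega
      · exact h'
    have hBsub : ∀ h ∈ B, nodeKey h = [] ∧ (idx h).2.1 ≤ 1 := by
      intro h hh
      obtain ⟨η₁, hx1, hy1⟩ := hco g₁ hg₁ h hh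
      obtain ⟨η₂, hx2, hy2⟩ := hco g₂ hg₂ h hh
      obtain ⟨ht1, hne1⟩ := key_eq_of_hi hn₁ hx1 hK₁
      obtain ⟨ht2, hne2⟩ := key_eq_of_hi hn₂ hx2 hK₂
      have hηne : η₁.1 ≠ η₂.1 := fun e => hkk (by rw [← ht1, ← ht2, e])
      have h12 : key (idx h).2 η₁.1 = key (idx h).2 η₂.1 := hy1.trans hy2.symm
      rcases two_point hηne h12 with ⟨ha, hb⟩ | ⟨_, hc⟩
      · exact ⟨by rw [← hy1, hb], ha⟩
      · exact absurd (by rw [← ht1, ← ht2, hc]) hkk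
    have hle : B.ncard ≤ m * 2 := by
      have hcard : (Finset.univ.filter fun n : Fin 14 => n.1 ≤ 1).card = 2 := by decide
      calc B.ncard ≤ m * (Finset.univ.filter fun n : Fin 14 => n.1 ≤ 1).card :=
            ncard_le_shape hT B [] _ (fun h hh =>
              ⟨(hBsub h hh).1, by simp [(hBsub h hh).2]⟩)
        _ = m * 2 := by rw [hcard]
    omega
  · push_neg at hkey
    set A1 := {g ∈ A | (idx g).2.1 ≤ 1} with hA1
    set A2 := {g ∈ A | 10 ≤ (idx g).2.1} with hA2
    have hsub : A ⊆ A1 ∪ A2 := by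
      intro g hg
      rcases hshape g hg with ⟨h', _⟩ | ⟨h', _⟩
      · exact Or.inl ⟨hg, h'⟩
      · exact Or.inr ⟨hg, h'⟩
    have hA1key : ∀ g ∈ A1, nodeKey g = [] := by
      intro g hg
      rcases hshape g hg.1 with ⟨_, h'⟩ | ⟨h', _⟩
      · exact h'
      · exfalso; have := hg.2; omega
    have h1 : A1.ncard ≤ m * 2 := by
      have hcard : (Finset.univ.filter fun n : Fin 14 => n.1 ≤ 1).card = 2 := by decide
      calc A1.ncard ≤ m * (Finset.univ.filter fun n : Fin 14 => n.1 ≤ 1).card :=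
            ncard_le_shape hT A1 [] _ (fun g hg => ⟨hA1key g hg, by simp [hg.2]⟩)
        _ = m * 2 := by rw [hcard]
    have h2 : A2.ncard ≤ m * 4 := by
      rcases A2.eq_empty_or_nonempty with he | ⟨g₀, hg₀⟩
      · simp [he]
      · have hcard : (Finset.univ.filter fun n : Fin 14 => 10 ≤ n.1).card = 4 := by decide
        calc A2.ncard ≤ m * (Finset.univ.filter fun n : Fin 14 => 10 ≤ n.1).card :=
              ncard_le_shape hT A2 (nodeKey g₀) _ (fun g hg =>
                ⟨hkey g hg.1 g₀ hg₀.1 hg.2 hg₀.2, by simp [hg.2]⟩)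
          _ = m * 4 := by rw [hcard]
    have : A.ncard ≤ A1.ncard + A2.ncard :=
      le_trans (Set.ncard_le_ncard hsub
        ((finite_of_fixed_key hT A1 [] hA1key).union (by
          rcases A2.eq_empty_or_nonempty with he | ⟨g₀, hg₀⟩
          · rw [he]; exact Set.finite_empty
          · exact finite_of_fixed_key hT A2 (nodeKey g₀)
              (fun g hg => hkey g hg.1 g₀ hg₀.1 hg.2 hg₀.2))))
        (Set.ncard_union_le A1 A2)
    omega

lemma bset_left_eq (η : Node T) :
    {g ∈ Bset m η | IsLeftV g}
      = (fun q : Fin m × Fin 14 => cls (η, q.1, q.2)) '' {q | q.2.1 % 2 = 1} := by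
  ext g; constructor
  · rintro ⟨⟨i, n, rfl⟩, hl⟩
    exact ⟨(i, n), (isLeft_iff _).1 hl, rfl⟩
  · rintro ⟨⟨i, n⟩, hq, rfl⟩
    exact ⟨⟨i, n, rfl⟩, (isLeft_iff _).2 hq⟩

lemma bset_right_eq (η : Node T) :
    {g ∈ Bset m η | IsRightV g}
      = (fun q : Fin m × Fin 14 => cls (η, q.1, q.2)) '' {q | q.2.1 % 2 = 0} := by
  ext g; constructor
  · rintro ⟨⟨i, n, rfl⟩, hl⟩
    exact ⟨(i, n), (isRight_iff _).1 hl, rfl⟩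
  · rintro ⟨⟨i, n⟩, hq, rfl⟩
    exact ⟨⟨i, n, rfl⟩, (isRight_iff _).2 hq⟩

lemma f_inj (hT : IsOrdTree T) (η : Node T) :
    Function.Injective (fun q : Fin m × Fin 14 => cls (η, q.1, q.2)) := by
  intro q q' h
  have h1 : ((η, q.1, q.2) : PreV T m).2 = ((η, q'.1, q'.2) : PreV T m).2 :=
    ((cls_eq_iff hT).1 h).1
  exact Prod.ext (congrArg Prod.fst h1) (congrArg Prod.snd h1)

lemma ncard_left_bset (hT : IsOrdTree T) (η : Node T) :
    {g ∈ Bset m η | IsLeftV g}.ncard = 7 * m := by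
  rw [bset_left_eq, Set.ncard_image_of_injective _ (f_inj hT η)]
  have he : {q : Fin m × Fin 14 | q.2.1 % 2 = 1}
      = {q : Fin m × Fin 14 | q.2 ∈ Finset.univ.filter (fun n : Fin 14 => n.1 % 2 = 1)} := by
    ext q; simp
  have hcard : (Finset.univ.filter (fun n : Fin 14 => n.1 % 2 = 1)).card = 7 := by decide
  rw [he, ncard_setOf_snd_mem, hcard, Nat.mul_comm]

lemma ncard_right_bset (hT : IsOrdTree T) (η : Node T) :
    {g ∈ Bset m η | IsRightV g}.ncard = 7 * m := by
  rw [bset_right_eq, Set.ncard_image_of_injective _ (f_inj hT η)]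
  have he : {q : Fin m × Fin 14 | q.2.1 % 2 = 0}
      = {q : Fin m × Fin 14 | q.2 ∈ Finset.univ.filter (fun n : Fin 14 => n.1 % 2 = 0)} := by
    ext q; simp
  have hcard : (Finset.univ.filter (fun n : Fin 14 => n.1 % 2 = 0)).card = 7 := by decide
  rw [he, ncard_setOf_snd_mem, hcard, Nat.mul_comm]

lemma bset_finite (η : Node T) : (Bset m η).Finite := by
  have : Bset m η = Set.range (fun q : Fin m × Fin 14 => cls (η, q.1, q.2)) := by
    ext g
    exact ⟨fun ⟨i, n, h⟩ => ⟨(i, n), h⟩, fun ⟨⟨i, n⟩, h⟩ => ⟨i, n, h⟩⟩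
  rw [this]
  exact Set.finite_range _

end Aux

/-- a set `X` of vertices of `G^[m]_T` is a complete `7m × 7m`
bipartite subgraph iff `X = B(η)` for some `η ∈ T`. -/
theorem completeBip_iff_Bset (T : Set (List Ordinal)) (hT : IsOrdTree T)
    (m : ℕ) (hm : 1 ≤ m) (X : Set (GVert T m)) :
    IsCompleteBip (7 * m) (7 * m) X ↔ ∃ η : Node T, X = Bset m η := by
  constructor
  · rintro ⟨hLcard, hRcard, hadj⟩
    have hco : ∀ g ∈ {g ∈ X | IsLeftV g}, ∀ h ∈ {g ∈ X | IsRightV g},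
        ∃ η : Node T, key (idx g).2 η.1 = nodeKey g ∧ key (idx h).2 η.1 = nodeKey h :=
      fun g hg h hh => ((gadj_iff hT g h).1 (hadj g hg.1 h hh.1 hg.2 hh.2)).2
    have hco' : ∀ h ∈ {g ∈ X | IsRightV g}, ∀ g ∈ {g ∈ X | IsLeftV g},
        ∃ η : Node T, key (idx h).2 η.1 = nodeKey h ∧ key (idx g).2 η.1 = nodeKey g :=
      fun h hh g hg => (hco g hg h hh).imp (fun η ⟨a, b⟩ => ⟨b, a⟩)
    obtain ⟨g₀, hg₀, hpt₀⟩ :=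
      exists_pointlike hT hm _ _ hLcard hRcard hco
    obtain ⟨h₀, hh₀, hpt₀'⟩ :=
      exists_pointlike hT hm _ _ hRcard hLcard hco'
    obtain ⟨η₀, hx, hy⟩ := hco g₀ hg₀ h₀ hh₀
    have hη₀g : η₀.1 = nodeKey g₀ := hpt₀ _ hx
    refine ⟨η₀, ?_⟩
    have hLsub : {g ∈ X | IsLeftV g} ⊆ {g ∈ Bset m η₀ | IsLeftV g} := by
      intro g hg
      obtain ⟨η, hx', hy'⟩ := hco' h₀ hh₀ g hg
      have : η = η₀ := Subtype.ext ((hpt₀' _ hx').trans (hpt₀' _ hy).symm)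
      exact ⟨(mem_Bset_iff hT g η₀).2 (this ▸ hy'), hg.2⟩
    have hRsub : {g ∈ X | IsRightV g} ⊆ {g ∈ Bset m η₀ | IsRightV g} := by
      intro h hh
      obtain ⟨η, hx', hy'⟩ := hco g₀ hg₀ h hh
      have : η = η₀ := Subtype.ext ((hpt₀ _ hx').trans (hpt₀ _ hx).symm)
      exact ⟨(mem_Bset_iff hT h η₀).2 (this ▸ hy'), hh.2⟩
    have hLeq : {g ∈ X | IsLeftV g} = {g ∈ Bset m η₀ | IsLeftV g} :=
      Set.eq_of_subset_of_ncard_le hLsub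
        (by rw [ncard_left_bset hT η₀, hLcard])
        ((bset_finite η₀).subset (Set.sep_subset _ _))
    have hReq : {g ∈ X | IsRightV g} = {g ∈ Bset m η₀ | IsRightV g} :=
      Set.eq_of_subset_of_ncard_le hRsub
        (by rw [ncard_right_bset hT η₀, hRcard])
        ((bset_finite η₀).subset (Set.sep_subset _ _))
    ext g
    constructor
    · intro hg
      rcases Nat.mod_two_eq_zero_or_one ((idx g).2.1) with hp | hp
      · have : g ∈ {g ∈ X | IsRightV g} := ⟨hg, (isRight_iff g).2 hp⟩
        rw [hReq] at this; exact this.1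
      · have : g ∈ {g ∈ X | IsLeftV g} := ⟨hg, (isLeft_iff g).2 hp⟩
        rw [hLeq] at this; exact this.1
    · intro hg
      rcases Nat.mod_two_eq_zero_or_one ((idx g).2.1) with hp | hp
      · have : g ∈ {g ∈ Bset m η₀ | IsRightV g} := ⟨hg, (isRight_iff g).2 hp⟩
        rw [← hReq] at this; exact this.1
      · have : g ∈ {g ∈ Bset m η₀ | IsLeftV g} := ⟨hg, (isLeft_iff g).2 hp⟩
        rw [← hLeq] at this; exact this.1
  · rintro ⟨η, rfl⟩
    refine ⟨ncard_left_bset hT η, ncard_right_bset hT η, ?_⟩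
    intro g hg h hh hgl hhr
    obtain ⟨i₁, n₁, rfl⟩ := hg
    obtain ⟨i₂, n₂, rfl⟩ := hh
    refine ⟨(η, i₁, n₁), (η, i₂, n₂), rfl, rfl, rfl, ?_⟩
    have h1 := (isLeft_iff _).1 hgl
    have h2 := (isRight_iff _).1 hhr
    simp only [idx_cls] at h1 h2
    show (n₁.1 + n₂.1) % 2 = 1
    omega
end
end

section
/- For every infinite cardinal λ there exists a family (T_i)_{i<λ} of λ special subtrees of λ^{<ω} that are pairwise non-back-and-forth-equivalent: for i ≠ j, the structures (T_i, ⊴) and (T_j, ⊴) are not ≡∞ℵ₀-equivalent. -/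
noncomputable section

/-- a finite partial map (given by its graph `p`) between structures each with a
single binary relation is a partial isomorphism if it is functional, injective,
and preserves and reflects the relation. -/
def IsPartialIso {M N : Type*} (r : M → M → Prop) (s : N → N → Prop)
    (p : Finset (M × N)) : Prop :=
  (∀ x y y', (x, y) ∈ p → (x, y') ∈ p → y = y') ∧
  (∀ x x' y, (x, y) ∈ p → (x', y) ∈ p → x = x') ∧
  (∀ x y x' y', (x, y) ∈ p → (x', y') ∈ p → (r x x' ↔ s y y'))

/-- back-and-forth equivalence (`≡∞ℵ₀`) of two structures, each consisting of a
single binary relation: a nonempty family of finite partial isomorphisms with the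
back-and-forth extension property. -/
def BackForth {M N : Type*} (r : M → M → Prop) (s : N → N → Prop) : Prop :=
  ∃ F : Set (Finset (M × N)), F.Nonempty ∧
    (∀ p ∈ F, IsPartialIso r s p) ∧
    ∀ p ∈ F, ∀ a : M, ∀ b : N,
      ∃ q ∈ F, p ⊆ q ∧ (∃ b', (a, b') ∈ q) ∧ (∃ a', (a', b) ∈ q)

/-- a subtree of `λ^{<ω}`: a nonempty set of finite sequences closed under
initial segments -/
def IsSubtree {lam : Type*} (T : Set (List lam)) : Prop :=
  T.Nonempty ∧ ∀ l ∈ T, ∀ l', l' <+: l → l' ∈ T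

/-- `η` is contained in a branch of `T`: some `ν ∈ λ^ω` extends `η` with all its
finite restrictions in `T`. -/
def InBranch {lam : Type*} (T : Set (List lam)) (η : List lam) : Prop :=
  ∃ ν : ℕ → lam, (∀ n : ℕ, (List.ofFn fun i : Fin n => ν i) ∈ T) ∧
    η = List.ofFn fun i : Fin η.length => ν i

/-- `T` is special: for every `η ∈ T` contained in a branch, every immediate
successor of `η` in `T` has a proper extension in `T`. -/
def IsSpecial {lam : Type*} (T : Set (List lam)) : Prop :=
  ∀ η ∈ T, InBranch T η →
    ∀ ν ∈ T, η <+: ν → ν.length = η.length + 1 →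
      ∃ ρ ∈ T, ν <+: ρ ∧ ν ≠ ρ

/-! Order `λ` well, and let `T_i` be the tree of strictly decreasing sequences starting with `i`.
These trees have no infinite branches, so they are vacuously special. In a back-and-forth
system between `T_i` and `T_j`, proper extensions must be matched with proper extensions, so
the relation "some matched pair of nodes ends in `a` and `b`" is a bisimulation of the well
order with itself, hence the identity. The partner of the node `⟨i⟩` of `T_i` is then a node
of `T_j` ending in `i`, so `i ≤ j`; by symmetry `i = j`. -/

section BackAndForth

variable {M N : Type*} {r : M → M → Prop} {s : N → N → Prop}

def IsBackForthSystem (r : M → M → Prop) (s : N → N → Prop) (F : Set (Finset (M × N))) :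
    Prop :=
  (∀ p ∈ F, IsPartialIso r s p) ∧
    ∀ p ∈ F, ∀ a : M, ∀ b : N, ∃ q ∈ F, p ⊆ q ∧ (∃ b', (a, b') ∈ q) ∧ (∃ a', (a', b) ∈ q)

theorem backForth_iff : BackForth r s ↔ ∃ F, F.Nonempty ∧ IsBackForthSystem r s F := Iff.rfl

def invSystem (F : Set (Finset (M × N))) : Set (Finset (N × M)) :=
  Finset.map (Equiv.prodComm M N).toEmbedding '' F

theorem mem_map_prodComm {p : Finset (M × N)} {a : M} {b : N} :
    (b, a) ∈ p.map (Equiv.prodComm M N).toEmbedding ↔ (a, b) ∈ p := by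
  simp [Finset.mem_map_equiv]

theorem IsBackForthSystem.symm {F : Set (Finset (M × N))} (hF : IsBackForthSystem r s F) :
    IsBackForthSystem s r (invSystem F) := by
  refine ⟨?_, ?_⟩
  · rintro _ ⟨p, hp, rfl⟩
    obtain ⟨hfun, hinj, hrel⟩ := hF.1 p hp
    refine ⟨?_, ?_, ?_⟩ <;> simp only [mem_map_prodComm] at *
    · exact fun y x x' h h' => hinj x x' y h h'
    · exact fun y y' x h h' => hfun x y y' h h'
    · exact fun y x y' x' h h' => (hrel x y x' y' h h').symm
  · rintro _ ⟨p, hp, rfl⟩ b a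
    obtain ⟨q, hq, hpq, ⟨b', hb'⟩, ⟨a', ha'⟩⟩ := hF.2 p hp a b
    refine ⟨_, ⟨q, hq, rfl⟩, Finset.map_subset_map.mpr hpq, ⟨a', ?_⟩, ⟨b', ?_⟩⟩ <;>
      simpa only [mem_map_prodComm]

theorem BackForth.symm (h : BackForth r s) : BackForth s r := by
  obtain ⟨F, ⟨p, hp⟩, hF⟩ := backForth_iff.mp h
  exact backForth_iff.mpr ⟨invSystem F, ⟨_, p, hp, rfl⟩, hF.symm⟩

theorem IsBackForthSystem.rel_iff {F : Set (Finset (M × N))} (hF : IsBackForthSystem r s F)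
    {q : Finset (M × N)} (hq : q ∈ F) {x x' : M} {y y' : N} (h : (x, y) ∈ q)
    (h' : (x', y') ∈ q) : r x x' ↔ s y y' :=
  (hF.1 q hq).2.2 x y x' y' h h'

theorem IsBackForthSystem.forall_rel_of_forall_rel {F : Set (Finset (M × N))}
    (hF : IsBackForthSystem r s F) {p : Finset (M × N)} (hp : p ∈ F) {x : M} {y : N}
    (hxy : (x, y) ∈ p) (hy : ∀ y', s y y') (x' : M) : r x x' := by
  obtain ⟨q, hq, hpq, ⟨y', hy'⟩, -⟩ := hF.2 p hp x' y
  exact (hF.rel_iff hq (hpq hxy) hy').mpr (hy y')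

theorem IsBackForthSystem.exists_strict_forth {F : Set (Finset (M × N))}
    (hF : IsBackForthSystem r s F) {p : Finset (M × N)} (hp : p ∈ F) {x x' : M} {y : N}
    (hxy : (x, y) ∈ p) (hx : r x x') (hx' : ¬ r x' x) :
    ∃ q ∈ F, ∃ y', (x', y') ∈ q ∧ s y y' ∧ ¬ s y' y := by
  obtain ⟨q, hq, hpq, ⟨y', hy'⟩, -⟩ := hF.2 p hp x' y
  exact ⟨q, hq, y', hy', (hF.rel_iff hq (hpq hxy) hy').mp hx,
    fun h => hx' ((hF.rel_iff hq hy' (hpq hxy)).mpr h)⟩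

end BackAndForth

theorem eq_of_bisimulation {α : Type*} [LinearOrder α] [WellFoundedLT α] {R : α → α → Prop}
    (forth : ∀ a b, R a b → ∀ a' < a, ∃ b' < b, R a' b')
    (back : ∀ a b, R a b → ∀ b' < b, ∃ a' < a, R a' b') {a b : α} (h : R a b) : a = b := by
  induction a using WellFoundedLT.induction generalizing b with
  | ind a ih =>
    rcases lt_trichotomy a b with hab | rfl | hba
    · obtain ⟨a', ha', h'⟩ := back a b h a hab
      exact absurd (ih a' ha' h') ha'.ne
    · rfl
    · obtain ⟨b', hb', h'⟩ := forth a b h b hba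
      exact absurd (ih b hba h') hb'.ne'

theorem isSpecial_of_forall_not_inBranch {α : Type*} {T : Set (List α)}
    (hT : ∀ η, ¬ InBranch T η) : IsSpecial T :=
  fun η _ hη => (hT η hη).elim

section DescTree

variable {α : Type*} [LinearOrder α]

theorem List.Pairwise.getLast?_le {l : List α} (hl : l.Pairwise (· > ·)) {b x : α}
    (hb : l.getLast? = some b) (hx : x ∈ l) : b ≤ x := by
  obtain ⟨l', rfl⟩ := List.getLast?_eq_some_iff.mp hb
  rcases List.mem_append.mp hx with hx | hx
  · exact (List.pairwise_append.mp hl).2.2 x hx b (List.mem_singleton_self b) |>.le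
  · exact (List.mem_singleton.mp hx).ge

theorem List.Pairwise.exists_getLast?_lt {l₁ l₂ : List α} (h₂ : l₂.Pairwise (· > ·))
    (hp : l₁ <+: l₂) (hne : ¬ l₂ <+: l₁) {b : α} (hb : l₁.getLast? = some b) :
    ∃ b' < b, l₂.getLast? = some b' := by
  obtain ⟨t, rfl⟩ := hp
  have ht : t ≠ [] := by rintro rfl; simp at hne
  obtain ⟨b', hb'⟩ := Option.isSome_iff_exists.mp (List.getLast?_isSome.mpr ht)
  refine ⟨b', (List.pairwise_append.mp h₂).2.2 b (List.mem_of_getLast? hb) b'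
    (List.mem_of_getLast? hb'), ?_⟩
  rw [List.getLast?_append_of_ne_nil _ ht, hb']

def descTree (i : α) : Set (List α) :=
  {l | l.Pairwise (· > ·) ∧ ∀ x ∈ l.head?, x = i}

theorem nil_mem_descTree (i : α) : [] ∈ descTree i := by
  simp [descTree]

theorem singleton_mem_descTree (i : α) : [i] ∈ descTree i := by
  simp [descTree]

theorem descTree_isSubtree (i : α) : IsSubtree (descTree i) := by
  refine ⟨⟨[], nil_mem_descTree i⟩, fun l ⟨hl, hhead⟩ l' hl' => ⟨hl.sublist hl'.sublist, ?_⟩⟩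
  obtain ⟨t, rfl⟩ := hl'
  simp_all [List.head?_append]

theorem not_inBranch_descTree [WellFoundedLT α] (i : α) (η : List α) :
    ¬ InBranch (descTree i) η := by
  rintro ⟨ν, hν, -⟩
  refine not_strictAnti_of_wellFoundedLT ν fun m n hmn => ?_
  exact List.pairwise_ofFn.mp (hν (n + 1)).1
    (show Fin.mk m (by omega) < Fin.mk n (by omega) from hmn)

theorem append_mem_descTree {i : α} {l : List α} (hl : l ∈ descTree i) {a b : α}
    (hb : l.getLast? = some b) (ha : a < b) : l ++ [a] ∈ descTree i := by
  refine ⟨List.pairwise_append.mpr ⟨hl.1, List.pairwise_singleton _ _, ?_⟩, ?_⟩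
  · simpa using fun x hx => ha.trans_le (hl.1.getLast?_le hb hx)
  · obtain ⟨l', rfl⟩ := List.getLast?_eq_some_iff.mp hb
    simpa [List.head?_append] using hl.2

theorem le_of_mem_descTree {i : α} {l : List α} (hl : l ∈ descTree i) {b : α}
    (hb : l.getLast? = some b) : b ≤ i := by
  cases l with
  | nil => simp at hb
  | cons x t =>
    obtain rfl := hl.2 x rfl
    exact hl.1.getLast?_le hb List.mem_cons_self

def lastMatched {i j : α} (F : Set (Finset (descTree i × descTree j))) (a b : α) : Prop :=
  ∃ p ∈ F, ∃ η ν, (η, ν) ∈ p ∧ η.1.getLast? = some a ∧ ν.1.getLast? = some b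

theorem lastMatched_invSystem {i j : α} {F : Set (Finset (descTree i × descTree j))}
    {a b : α} : lastMatched (invSystem F) b a ↔ lastMatched F a b := by
  constructor
  · rintro ⟨_, ⟨p, hp, rfl⟩, ν, η, h, hν, hη⟩
    exact ⟨p, hp, η, ν, mem_map_prodComm.mp h, hη, hν⟩
  · rintro ⟨p, hp, η, ν, h, hη, hν⟩
    exact ⟨_, ⟨p, hp, rfl⟩, ν, η, mem_map_prodComm.mpr h, hν, hη⟩

theorem lastMatched_forth {i j : α} {F : Set (Finset (descTree i × descTree j))}
    (hF : IsBackForthSystem (fun a b : {l // l ∈ descTree i} => a.1 <+: b.1)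
      (fun a b : {l // l ∈ descTree j} => a.1 <+: b.1) F)
    {a b : α} (h : lastMatched F a b) {a' : α} (ha' : a' < a) :
    ∃ b' < b, lastMatched F a' b' := by
  obtain ⟨p, hp, η, ν, hην, hη, hν⟩ := h
  obtain ⟨q, hq, ν', hν', hνν', hν'ν⟩ := hF.exists_strict_forth hp hην
    (x' := ⟨η.1 ++ [a'], append_mem_descTree η.2 hη ha'⟩) (List.prefix_append _ _)
    (fun h => by simpa using h.length_le)
  obtain ⟨b', hb', hlast⟩ := ν'.2.1.exists_getLast?_lt hνν' hν'ν hν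
  exact ⟨b', hb', q, hq, _, ν', hν', by simp, hlast⟩

theorem le_of_backForth_descTree [WellFoundedLT α] {i j : α}
    (h : BackForth (fun a b : {l // l ∈ descTree i} => a.1 <+: b.1)
      (fun a b : {l // l ∈ descTree j} => a.1 <+: b.1)) : i ≤ j := by
  obtain ⟨F, ⟨p, hp⟩, hF⟩ := backForth_iff.mp h
  have back {a b : α} (h : lastMatched F a b) {b' : α} (hb' : b' < b) :
      ∃ a' < a, lastMatched F a' b' := by
    obtain ⟨a', ha', h'⟩ := lastMatched_forth hF.symm (lastMatched_invSystem.mpr h) hb'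
    exact ⟨a', ha', lastMatched_invSystem.mp h'⟩
  have bisim {a b : α} (h : lastMatched F a b) : a = b :=
    eq_of_bisimulation (R := lastMatched F) (fun _ _ h _ => lastMatched_forth hF h)
      (fun _ _ h _ => back h) h
  obtain ⟨q, hq, -, ⟨ν, hν⟩, -⟩ :=
    hF.2 p hp ⟨[i], singleton_mem_descTree i⟩ ⟨[], nil_mem_descTree j⟩
  -- the root `[]` is the least node, so only the root can be matched with it
  have hν_ne : ν.1 ≠ [] := fun hnil => by
    simpa using hF.forall_rel_of_forall_rel hq hν (by simp [hnil]) ⟨[], nil_mem_descTree i⟩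
  obtain ⟨b, hb⟩ := Option.isSome_iff_exists.mp (List.getLast?_isSome.mpr hν_ne)
  obtain rfl : i = b := bisim ⟨q, hq, _, ν, hν, rfl, hb⟩
  exact le_of_mem_descTree ν.2 hb

end DescTree

theorem exists_many_special_subtrees_general (lam : Type*) :
    ∃ T : lam → Set (List lam),
      (∀ i, IsSubtree (T i) ∧ IsSpecial (T i)) ∧
      ∀ i j, i ≠ j →
        ¬ BackForth (fun a b : {l : List lam // l ∈ T i} => a.1 <+: b.1)
            (fun a b : {l : List lam // l ∈ T j} => a.1 <+: b.1) := by
  obtain ⟨_, _⟩ := exists_wellFoundedLT lam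
  refine ⟨descTree, fun i => ⟨descTree_isSubtree i,
    isSpecial_of_forall_not_inBranch (not_inBranch_descTree i)⟩, fun i j hij h => ?_⟩
  exact hij (le_antisymm (le_of_backForth_descTree h) (le_of_backForth_descTree h.symm))

/-- for every infinite `λ` there is a family of `λ` special subtrees
of `λ^{<ω}` that are pairwise non-back-and-forth-equivalent (as structures with
the initial segment relation `⊴`). -/
theorem exists_many_special_subtrees (lam : Type*) [Infinite lam] :
    ∃ T : lam → Set (List lam),
      (∀ i, IsSubtree (T i) ∧ IsSpecial (T i)) ∧
      ∀ i j, i ≠ j →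
        ¬ BackForth (fun a b : {l : List lam // l ∈ T i} => a.1 <+: b.1)
            (fun a b : {l : List lam // l ∈ T j} => a.1 <+: b.1) :=
  exists_many_special_subtrees_general lam
end
end

section
/- Let λ be an infinite cardinal and L a relational language with at most λ symbols. For an L-structure M with universe λ, let τ(M) be the colored tree with universe λ^{<ω}, the initial-segment order ⊴, and coloring c_M assigning to each node ⟨α₀,…,α_{n−1}⟩ ∈ λⁿ the set of all atomic L-formulas φ(x₀,…,x_{n−1}) such that M ⊨ φ(α₀,…,α_{n−1}). Then for all L-structures M, N with universe λ: M ≡∞ℵ₀ N if and only if there is a nonempty set F of finite partial maps f from λ^{<ω} to λ^{<ω}, each satisfying η ⊴ ν ⟺ f(η) ⊴ f(ν) and c_N(f(η)) = c_M(η) for all η, ν ∈ dom(f), such that for every f ∈ F, every η ∈ λ^{<ω} and every ν ∈ λ^{<ω} there is g ∈ F extending f with η ∈ dom(g) and ν ∈ range(g). -/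
open FirstOrder FirstOrder.Language

noncomputable section

/-- a finite partial map (given by its graph `p`) between two `L`-structures is a
partial isomorphism if it is functional, injective, and preserves and reflects all
atomic formulas. -/
def LPartialIso (L : Language) {M N : Type*} (SM : L.Structure M) (SN : L.Structure N)
    (p : Finset (M × N)) : Prop :=
  (∀ x y y', (x, y) ∈ p → (x, y') ∈ p → y = y') ∧
  (∀ x x' y, (x, y) ∈ p → (x', y) ∈ p → x = x') ∧
  ∀ (n : ℕ) (R : L.Relations n) (a : Fin n → M) (b : Fin n → N),
    (∀ i, (a i, b i) ∈ p) → (SM.RelMap R a ↔ SN.RelMap R b)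

/-- back-and-forth equivalence (`≡∞ℵ₀`) of two `L`-structures: a nonempty family of
finite partial isomorphisms with the back-and-forth extension property. -/
def LBackForth (L : Language) {M N : Type*} (SM : L.Structure M) (SN : L.Structure N) :
    Prop :=
  ∃ F : Set (Finset (M × N)), F.Nonempty ∧
    (∀ p ∈ F, LPartialIso L SM SN p) ∧
    ∀ p ∈ F, ∀ a : M, ∀ b : N,
      ∃ q ∈ F, p ⊆ q ∧ (∃ b', (a, b') ∈ q) ∧ (∃ a', (a', b) ∈ q)

/-- the color of the node `⟨α₀, …, α_{n-1}⟩ ∈ λⁿ` in the colored tree `τ(M)`: the set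
of atomic `L`-formulas `φ(x₀, …, x_{n-1})` (in exactly `n = lg η` variables) such that
`M ⊨ φ(α₀, …, α_{n-1})`. -/
def treeColor (L : Language) {lam : Type} [Nonempty lam] (S : L.Structure lam)
    (η : List lam) : Set (Σ n : ℕ, L.Formula (Fin n)) :=
  {p | p.1 = η.length ∧ p.2.IsAtomic ∧
    @Formula.Realize L lam S (Fin p.1) p.2 (fun i => η.getD i.1 (Classical.arbitrary lam))}

/-! ### Auxiliary lemmas -/

section Aux

lemma BF.prefix_iff_getD {α : Type*} (d : α) (x y : List α) :
    x <+: y ↔ x.length ≤ y.length ∧ ∀ i < x.length, x.getD i d = y.getD i d := by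
  constructor
  · intro h
    refine ⟨h.length_le, fun i hi => ?_⟩
    rw [List.getD_eq_getElem _ _ hi, List.getD_eq_getElem _ _ (lt_of_lt_of_le hi h.length_le)]
    exact h.getElem hi
  · rintro ⟨hle, h⟩
    rw [List.prefix_iff_eq_take]
    apply List.ext_getElem
    · simp [Nat.min_eq_left hle]
    · intro i h1 h2
      rw [List.getElem_take]
      have := h i h1
      rwa [List.getD_eq_getElem _ _ h1, List.getD_eq_getElem _ _ (lt_of_lt_of_le h1 hle)] at this

lemma BF.eq_concat_of_prefix_succ {α : Type*} {l l' : List α} (h : l <+: l')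
    (hl : l'.length = l.length + 1) : ∃ c, l' = l ++ [c] := by
  obtain ⟨t, rfl⟩ := h
  rw [List.length_append] at hl
  obtain ⟨c, rfl⟩ := List.length_eq_one_iff.mp (show t.length = 1 by omega)
  exact ⟨c, rfl⟩

lemma BF.mem_nodeP {α : Type*} [DecidableEq α] (η ν : List α) (x : α × α) :
    x ∈ (η.zip ν).toFinset ↔
      ∃ i, ∃ (h1 : i < η.length) (h2 : i < ν.length), η[i] = x.1 ∧ ν[i] = x.2 := by
  rw [List.mem_toFinset, List.mem_iff_getElem]
  constructor
  · rintro ⟨i, hi, he⟩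
    rw [List.length_zip, lt_min_iff] at hi
    rw [List.getElem_zip] at he
    exact ⟨i, hi.1, hi.2, by rw [← he], by rw [← he]⟩
  · rintro ⟨i, h1, h2, he1, he2⟩
    refine ⟨i, by rw [List.length_zip]; omega, ?_⟩
    rw [List.getElem_zip, he1, he2]

lemma BF.term_var {L : Language} [L.IsRelational] {α : Type*} (t : L.Term α) :
    ∃ a, t = Term.var a := by
  cases t with
  | var a => exact ⟨a, rfl⟩
  | func f _ => exact isEmptyElim f

lemma BF.realize_equal_var {L : Language} {M : Type*} (SM : L.Structure M) {n : ℕ}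
    (i j : Fin n) (v : Fin n → M) :
    @Formula.Realize L M SM _ (Term.equal (Term.var i) (Term.var j)) v ↔ v i = v j := by
  letI := SM
  simp [Term.equal, Term.bdEqual, Formula.Realize, BoundedFormula.Realize]

lemma BF.realize_rel_var {L : Language} {M : Type*} (SM : L.Structure M) {n m : ℕ}
    (R : L.Relations m) (k : Fin m → Fin n) (v : Fin n → M) :
    @Formula.Realize L M SM _ (R.formula fun i => Term.var (k i)) v ↔
      Structure.RelMap R (fun i => v (k i)) := by
  letI := SM
  simp [Relations.formula, Formula.Realize]

lemma BF.atomic_transfer {L : Language} [L.IsRelational] {M N : Type*}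
    (SM : L.Structure M) (SN : L.Structure N) {p : Finset (M × N)}
    (hp : LPartialIso L SM SN p) {n : ℕ} {φ : L.Formula (Fin n)} (hφ : φ.IsAtomic)
    {a : Fin n → M} {b : Fin n → N} (hab : ∀ i, (a i, b i) ∈ p) :
    @Formula.Realize L M SM _ φ a ↔ @Formula.Realize L N SN _ φ b := by
  letI := SM; letI := SN
  cases hφ with
  | equal t₁ t₂ =>
    obtain ⟨s₁, rfl⟩ := BF.term_var t₁
    obtain ⟨s₂, rfl⟩ := BF.term_var t₂
    rcases s₁ with i | i; swap; · exact i.elim0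
    rcases s₂ with j | j; swap; · exact j.elim0
    simp only [Formula.Realize, Term.bdEqual, BoundedFormula.Realize, Term.realize_var,
      Sum.elim_inl]
    constructor
    · intro h; exact hp.1 _ _ _ (hab i) (h ▸ hab j)
    · intro h; exact hp.2.1 _ _ _ (hab i) (h ▸ hab j)
  | rel R ts =>
    have hk : ∀ i, ∃ k, ts i = Term.var (Sum.inl k) := by
      intro i
      obtain ⟨s, hs⟩ := BF.term_var (ts i)
      rcases s with k | k
      · exact ⟨k, hs⟩
      · exact k.elim0
    choose k hkk using hk
    have : ts = fun i => Term.var (Sum.inl (k i)) := funext hkk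
    subst this
    simp only [Formula.Realize, BoundedFormula.realize_rel, Term.realize_var, Sum.elim_inl]
    exact hp.2.2 _ R _ _ fun i => hab (k i)

lemma BF.refl_mem {L : Language} {lam : Type} [Nonempty lam] (S : L.Structure lam)
    (μ : List lam) (h : 0 < μ.length) :
    (⟨μ.length, Term.equal (Term.var ⟨0, h⟩) (Term.var ⟨0, h⟩)⟩ : Σ n, L.Formula (Fin n)) ∈
      treeColor L S μ :=
  ⟨rfl, BoundedFormula.IsAtomic.equal _ _, (BF.realize_equal_var S _ _ _).2 rfl⟩

lemma BF.color_eq_length {L : Language} {lam : Type} [Nonempty lam]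
    (S₁ S₂ : L.Structure lam) {η ν : List lam}
    (h : treeColor L S₂ ν = treeColor L S₁ η) : ν.length = η.length := by
  rcases Nat.eq_zero_or_pos η.length with h0 | hpos
  · rcases Nat.eq_zero_or_pos ν.length with h0' | hpos'
    · omega
    · have := BF.refl_mem S₂ ν hpos'
      rw [h] at this
      exact this.1
  · have := BF.refl_mem S₁ η hpos
    rw [← h] at this
    exact this.1.symm

lemma BF.realize_of_color_eq {L : Language} {lam : Type} [Nonempty lam]
    (S₁ S₂ : L.Structure lam) {η ν : List lam}
    (h : treeColor L S₂ ν = treeColor L S₁ η)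
    {φ : L.Formula (Fin η.length)} (hφ : φ.IsAtomic) :
    (@Formula.Realize L lam S₁ _ φ (fun i => η.getD i.1 (Classical.arbitrary lam)) ↔
      @Formula.Realize L lam S₂ _ φ
        (fun i : Fin η.length => ν.getD i.1 (Classical.arbitrary lam))) := by
  have hlen : ν.length = η.length := BF.color_eq_length S₁ S₂ h
  constructor
  · intro hr
    have hm : (⟨η.length, φ⟩ : Σ n, L.Formula (Fin n)) ∈ treeColor L S₁ η := ⟨rfl, hφ, hr⟩
    rw [← h] at hm
    exact hm.2.2
  · intro hr
    have hm : (⟨η.length, φ⟩ : Σ n, L.Formula (Fin n)) ∈ treeColor L S₂ ν :=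
      ⟨hlen.symm, hφ, hr⟩
    rw [h] at hm
    exact hm.2.2

lemma BF.treeColor_eq {L : Language} [L.IsRelational] {lam : Type} [Nonempty lam]
    (S₁ S₂ : L.Structure lam) {p : Finset (lam × lam)} (hp : LPartialIso L S₁ S₂ p)
    {η ν : List lam} (hlen : η.length = ν.length)
    (hm : ∀ i < η.length,
      (η.getD i (Classical.arbitrary lam), ν.getD i (Classical.arbitrary lam)) ∈ p) :
    treeColor L S₂ ν = treeColor L S₁ η := by
  ext e
  obtain ⟨m, φ⟩ := e
  simp only [treeColor, Set.mem_setOf_eq]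
  constructor
  · rintro ⟨h1, h2, h3⟩
    have h1' : m = η.length := by omega
    refine ⟨h1', h2, ?_⟩
    exact (BF.atomic_transfer S₁ S₂ hp h2
      (fun i : Fin m => hm i.1 (by omega))).mpr h3
  · rintro ⟨h1, h2, h3⟩
    have h1' : m = ν.length := by omega
    refine ⟨h1', h2, ?_⟩
    exact (BF.atomic_transfer S₁ S₂ hp h2
      (fun i : Fin m => hm i.1 (by omega))).mp h3

end Aux

/-- for a relational language `L` with at most `λ` symbols and
`L`-structures `M`, `N` with universe `λ`, `M ≡∞ℵ₀ N` iff there is a back-and-forth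
family of finite partial maps between the colored trees `τ(M)` and `τ(N)`
(maps on `λ^{<ω}` preserving and reflecting the initial-segment relation and
preserving the colors). -/
theorem bf_iff_colored_tree_bf (lam : Type) [Infinite lam]
    (L : FirstOrder.Language.{0, 0}) [L.IsRelational] (hcard : L.card ≤ Cardinal.mk lam)
    (S₁ S₂ : L.Structure lam) :
    LBackForth L S₁ S₂ ↔
      ∃ F : Set (Finset (List lam × List lam)), F.Nonempty ∧
        (∀ p ∈ F,
          (∀ x y y', (x, y) ∈ p → (x, y') ∈ p → y = y') ∧
          (∀ x y x' y', (x, y) ∈ p → (x', y') ∈ p → (x <+: x' ↔ y <+: y')) ∧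
          (∀ x y, (x, y) ∈ p → treeColor L S₂ y = treeColor L S₁ x)) ∧
        ∀ p ∈ F, ∀ a b : List lam,
          ∃ q ∈ F, p ⊆ q ∧ (∃ b', (a, b') ∈ q) ∧ (∃ a', (a', b) ∈ q) := by
  classical
  set d : lam := Classical.arbitrary lam with hd
  constructor
  -- Forward direction
  · rintro ⟨F, ⟨p₀, hp₀⟩, hiso, hext⟩
    refine ⟨{q | ∃ p ∈ F, ∀ x ∈ q,
        x.1.length = x.2.length ∧ ∀ i < x.1.length, (x.1.getD i d, x.2.getD i d) ∈ p},
      ⟨∅, p₀, hp₀, by simp⟩, ?_, ?_⟩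
    · rintro q ⟨p, hpF, hq⟩
      have hpi := hiso p hpF
      have compat : ∀ x y x' y', (x, y) ∈ q → (x', y') ∈ q → (x <+: x' ↔ y <+: y') := by
        intro x y x' y' hxy hxy'
        obtain ⟨hl, hm⟩ := hq _ hxy
        obtain ⟨hl', hm'⟩ := hq _ hxy'
        simp only at hl hm hl' hm'
        constructor
        · intro hpre
          rw [BF.prefix_iff_getD d] at hpre ⊢
          refine ⟨by omega, fun i hi => ?_⟩
          refine hpi.1 (x.getD i d) _ _ (hm i (by omega)) ?_
          rw [hpre.2 i (by omega)]
          exact hm' i (by omega)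
        · intro hpre
          rw [BF.prefix_iff_getD d] at hpre ⊢
          refine ⟨by omega, fun i hi => ?_⟩
          refine hpi.2.1 _ _ (y.getD i d) (hm i (by omega)) ?_
          rw [hpre.2 i (by omega)]
          exact hm' i (by omega)
      refine ⟨?_, compat, ?_⟩
      · intro x y y' h1 h2
        have h3 := (compat x y x y' h1 h2).mp List.prefix_rfl
        have h4 := (compat x y' x y h2 h1).mp List.prefix_rfl
        exact h3.eq_of_length (le_antisymm h3.length_le h4.length_le)
      · intro x y hxy
        obtain ⟨hl, hm⟩ := hq _ hxy
        exact BF.treeColor_eq S₁ S₂ hpi hl hm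
    · rintro q ⟨p, hpF, hq⟩ a b
      have cover_dom : ∀ (l : List lam) (p' : Finset (lam × lam)), p' ∈ F →
          ∃ p'' ∈ F, p' ⊆ p'' ∧ ∀ x ∈ l, ∃ y, (x, y) ∈ p'' := by
        intro l
        induction l with
        | nil => exact fun p' h => ⟨p', h, subset_rfl, by simp⟩
        | cons x l ih =>
          intro p' h
          obtain ⟨p₁, hp₁F, hsub, ⟨y, hy⟩, -⟩ := hext p' h x d
          obtain ⟨p₂, hp₂F, hsub₂, hcov⟩ := ih p₁ hp₁F
          refine ⟨p₂, hp₂F, hsub.trans hsub₂, ?_⟩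
          intro z hz
          rcases List.mem_cons.mp hz with rfl | hz
          · exact ⟨y, hsub₂ hy⟩
          · exact hcov z hz
      have cover_ran : ∀ (l : List lam) (p' : Finset (lam × lam)), p' ∈ F →
          ∃ p'' ∈ F, p' ⊆ p'' ∧ ∀ y ∈ l, ∃ x, (x, y) ∈ p'' := by
        intro l
        induction l with
        | nil => exact fun p' h => ⟨p', h, subset_rfl, by simp⟩
        | cons y l ih =>
          intro p' h
          obtain ⟨p₁, hp₁F, hsub, -, ⟨x, hx⟩⟩ := hext p' h d y
          obtain ⟨p₂, hp₂F, hsub₂, hcov⟩ := ih p₁ hp₁F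
          refine ⟨p₂, hp₂F, hsub.trans hsub₂, ?_⟩
          intro z hz
          rcases List.mem_cons.mp hz with rfl | hz
          · exact ⟨x, hsub₂ hx⟩
          · exact hcov z hz
      obtain ⟨p₁, hp₁F, hsub₁, hcov₁⟩ := cover_dom a p hpF
      obtain ⟨p₂, hp₂F, hsub₂, hcov₂⟩ := cover_ran b p₁ hp₁F
      set f : lam → lam := fun x => if h : ∃ y, (x, y) ∈ p₂ then h.choose else d with hf
      set g : lam → lam := fun y => if h : ∃ x, (x, y) ∈ p₂ then h.choose else d with hg
      have hfspec : ∀ x, (∃ y, (x, y) ∈ p₂) → (x, f x) ∈ p₂ := by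
        intro x h
        rw [hf]; simp only [dif_pos h]; exact h.choose_spec
      have hgspec : ∀ y, (∃ x, (x, y) ∈ p₂) → (g y, y) ∈ p₂ := by
        intro y h
        rw [hg]; simp only [dif_pos h]; exact h.choose_spec
      refine ⟨insert (a, a.map f) (insert (b.map g, b) q), ⟨p₂, hp₂F, ?_⟩,
        ?_, ⟨a.map f, Finset.mem_insert_self _ _⟩,
        ⟨b.map g, Finset.mem_insert_of_mem (Finset.mem_insert_self _ _)⟩⟩
      · intro x hx
        rcases Finset.mem_insert.mp hx with rfl | hx
        · refine ⟨by simp, fun i hi => ?_⟩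
          simp only at hi ⊢
          have hi' : i < (a.map f).length := by simpa using hi
          rw [List.getD_eq_getElem _ _ hi, List.getD_eq_getElem _ _ hi', List.getElem_map]
          exact hfspec _ ⟨_, hsub₂ (Classical.choose_spec
            (hcov₁ a[i] (List.getElem_mem hi)))⟩
        rcases Finset.mem_insert.mp hx with rfl | hx
        · refine ⟨by simp, fun i hi => ?_⟩
          simp only at hi ⊢
          have hi' : i < b.length := by simpa using hi
          rw [List.getD_eq_getElem _ _ hi, List.getD_eq_getElem _ _ hi', List.getElem_map]
          exact hgspec _ (hcov₂ b[i] (List.getElem_mem hi'))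
        · obtain ⟨hl, hm⟩ := hq _ hx
          exact ⟨hl, fun i hi => hsub₂ (hsub₁ (hm i hi))⟩
      · intro x hx
        exact Finset.mem_insert_of_mem (Finset.mem_insert_of_mem hx)
  -- Backward direction
  · rintro ⟨F, ⟨q₀, hq₀⟩, hprops, hext⟩
    refine ⟨{s | ∃ q ∈ F, ∃ η ν : List lam, (η, ν) ∈ q ∧ s = (η.zip ν).toFinset}, ?_, ?_, ?_⟩
    · obtain ⟨q₁, hq₁, -, ⟨ν₀, hν₀⟩, -⟩ := hext q₀ hq₀ [] []
      exact ⟨_, q₁, hq₁, [], ν₀, hν₀, rfl⟩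
    · rintro s ⟨q, hqF, η, ν, hmem, rfl⟩
      obtain ⟨hfun, hpre, hcol⟩ := hprops q hqF
      have hc := hcol η ν hmem
      have hlen : ν.length = η.length := BF.color_eq_length S₁ S₂ hc
      refine ⟨?_, ?_, ?_⟩
      · -- functional
        rintro x y y' h1 h2
        obtain ⟨i, hi, hi', hx1, hy1⟩ := (BF.mem_nodeP η ν _).mp h1
        obtain ⟨j, hj, hj', hx2, hy2⟩ := (BF.mem_nodeP η ν _).mp h2
        have hηij : η.getD i d = η.getD j d := by
          rw [List.getD_eq_getElem _ _ hi, List.getD_eq_getElem _ _ hj, hx1, hx2]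
        have hr1 : @Formula.Realize L lam S₁ _
            (Term.equal (Term.var (⟨i, hi⟩ : Fin η.length)) (Term.var ⟨j, hj⟩))
            (fun k => η.getD k.1 d) := (BF.realize_equal_var S₁ _ _ _).mpr hηij
        have hr2 := (BF.realize_of_color_eq S₁ S₂ hc
          (BoundedFormula.IsAtomic.equal _ _)).mp hr1
        have hνij : ν.getD i d = ν.getD j d := (BF.realize_equal_var S₂ _ _ _).mp hr2
        rw [List.getD_eq_getElem _ _ hi', List.getD_eq_getElem _ _ hj', hy1, hy2] at hνij
        exact hνij
      · -- injective
        rintro x x' y h1 h2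
        obtain ⟨i, hi, hi', hx1, hy1⟩ := (BF.mem_nodeP η ν _).mp h1
        obtain ⟨j, hj, hj', hx2, hy2⟩ := (BF.mem_nodeP η ν _).mp h2
        have hνij : ν.getD i d = ν.getD j d := by
          rw [List.getD_eq_getElem _ _ hi', List.getD_eq_getElem _ _ hj', hy1, hy2]
        have hr2 : @Formula.Realize L lam S₂ _
            (Term.equal (Term.var (⟨i, hi⟩ : Fin η.length)) (Term.var ⟨j, hj⟩))
            (fun k => ν.getD k.1 d) := (BF.realize_equal_var S₂ _ _ _).mpr hνij
        have hr1 := (BF.realize_of_color_eq S₁ S₂ hc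
          (BoundedFormula.IsAtomic.equal _ _)).mpr hr2
        have hηij : η.getD i d = η.getD j d := (BF.realize_equal_var S₁ _ _ _).mp hr1
        rw [List.getD_eq_getElem _ _ hi, List.getD_eq_getElem _ _ hj, hx1, hx2] at hηij
        exact hηij
      · -- relations
        intro n R av bv hab
        have hk : ∀ i, ∃ k, ∃ (h1 : k < η.length) (h2 : k < ν.length),
            η[k] = av i ∧ ν[k] = bv i := fun i => (BF.mem_nodeP η ν _).mp (hab i)
        choose k hk1 hk2 hkη hkν using hk
        have hr1 : @Formula.Realize L lam S₁ _
            (R.formula fun i => Term.var (⟨k i, hk1 i⟩ : Fin η.length))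
            (fun j => η.getD j.1 d) ↔ S₁.RelMap R av := by
          rw [BF.realize_rel_var S₁]
          have hfeq : (fun i => η.getD (k i) d) = av :=
            funext fun i => by rw [List.getD_eq_getElem _ _ (hk1 i)]; exact hkη i
          show @Structure.RelMap L lam S₁ n R (fun i => η.getD (k i) d) ↔ _
          rw [hfeq]
        have hr2 : @Formula.Realize L lam S₂ _
            (R.formula fun i => Term.var (⟨k i, hk1 i⟩ : Fin η.length))
            (fun j => ν.getD j.1 d) ↔ S₂.RelMap R bv := by
          rw [BF.realize_rel_var S₂]
          have hfeq : (fun i => ν.getD (k i) d) = bv :=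
            funext fun i => by rw [List.getD_eq_getElem _ _ (hk2 i)]; exact hkν i
          show @Structure.RelMap L lam S₂ n R (fun i => ν.getD (k i) d) ↔ _
          rw [hfeq]
        rw [← hr1, ← hr2]
        exact BF.realize_of_color_eq S₁ S₂ hc (BoundedFormula.IsAtomic.rel _ _)
    · -- extension
      rintro s ⟨q, hqF, η, ν, hmem, rfl⟩ a b
      obtain ⟨q₁, hq₁F, hsub₁, ⟨ν₁, hν₁⟩, -⟩ := hext q hqF (η ++ [a]) []
      obtain ⟨hfun₁, hpre₁, hcol₁⟩ := hprops q₁ hq₁F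
      have hlν₁ : ν₁.length = η.length + 1 := by
        have := BF.color_eq_length S₁ S₂ (hcol₁ _ _ hν₁)
        simpa using this
      have hνpre : ν <+: ν₁ :=
        (hpre₁ η ν (η ++ [a]) ν₁ (hsub₁ hmem) hν₁).mp (List.prefix_append _ _)
      have hlν : ν.length = η.length :=
        BF.color_eq_length S₁ S₂ ((hprops q hqF).2.2 η ν hmem)
      obtain ⟨q₂, hq₂F, hsub₂, -, ⟨η₂, hη₂⟩⟩ := hext q₁ hq₁F [] (ν₁ ++ [b])
      obtain ⟨hfun₂, hpre₂, hcol₂⟩ := hprops q₂ hq₂F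
      have hlη₂ : η₂.length = η.length + 2 := by
        have := BF.color_eq_length S₁ S₂ (hcol₂ _ _ hη₂)
        simp only [List.length_append, List.length_singleton] at this
        omega
      have hηpre : (η ++ [a]) <+: η₂ :=
        (hpre₂ (η ++ [a]) ν₁ η₂ (ν₁ ++ [b]) (hsub₂ hν₁) hη₂).mpr (List.prefix_append _ _)
      have hηpre' : η <+: η₂ := (List.prefix_append _ _).trans hηpre
      have hνpre' : ν <+: ν₁ ++ [b] := hνpre.trans (List.prefix_append _ _)
      refine ⟨(η₂.zip (ν₁ ++ [b])).toFinset, ⟨q₂, hq₂F, η₂, _, hη₂, rfl⟩, ?_, ?_, ?_⟩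
      · -- subset
        intro x hx
        obtain ⟨i, hi, hi', hx1, hx2⟩ := (BF.mem_nodeP η ν _).mp hx
        refine (BF.mem_nodeP η₂ (ν₁ ++ [b]) _).mpr
          ⟨i, by omega, by simp; omega, ?_, ?_⟩
        · rw [← hx1]
          exact (hηpre'.getElem hi).symm
        · rw [← hx2]
          exact (hνpre'.getElem hi').symm
      · -- a in domain
        have h1 : η.length < η₂.length := by omega
        have h2 : η.length < (ν₁ ++ [b]).length := by simp; omega
        refine ⟨(ν₁ ++ [b])[η.length], (BF.mem_nodeP η₂ (ν₁ ++ [b]) _).mpr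
          ⟨η.length, h1, h2, ?_, rfl⟩⟩
        have := hηpre.getElem (by simp : η.length < (η ++ [a]).length)
        rw [← this]
        simp
      · -- b in range
        have h1 : ν₁.length < η₂.length := by omega
        have h2 : ν₁.length < (ν₁ ++ [b]).length := by simp
        refine ⟨η₂[ν₁.length], (BF.mem_nodeP η₂ (ν₁ ++ [b]) _).mpr
          ⟨ν₁.length, h1, h2, rfl, ?_⟩⟩
        simp
end
end
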